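/- arXiv:2012.10570 — 16 statements merged into one kernel-verified Lean document; each statement's English description precedes it below -/
import Mathlib

section
/- Every open pseudocompact submonoid of a Hausdorff topological group is precompact (totally bounded). -/
open Pointwise

/-- A subset `A` of a topological group `G` is precompact if for every neighborhood `V`
of the identity there is a finite set `K` with `A ⊆ K*V` and `A ⊆ V*K`. -/
def IsPrecompactIn {G : Type*} [Group G] [TopologicalSpace G] (A : Set G) : Prop :=
  ∀ V ∈ nhds (1 : G), ∃ K : Finset G, A ⊆ (K : Set G) * V ∧ A ⊆ V * (K : Set G)

/-- A space is pseudocompact if it is Tychonoff (completely regular Hausdorff/T1)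
and every continuous real-valued function on it is bounded. -/
def IsPseudocompact (X : Type*) [TopologicalSpace X] : Prop :=
  CompletelyRegularSpace X ∧ T1Space X ∧
    ∀ f : X → ℝ, Continuous f → ∃ M : ℝ, ∀ x, |f x| ≤ M

open Filter Topology Set

section Aux

variable {G : Type*} [Group G] [TopologicalSpace G] [IsTopologicalGroup G]

private lemma exists_symm_pow4_subset {V : Set G} (hV : V ∈ 𝓝 (1 : G)) :
    ∃ A : Set G, IsOpen A ∧ (1 : G) ∈ A ∧ A⁻¹ = A ∧ A * A * A * A ⊆ V := by
  obtain ⟨W₁, hW₁o, hW₁1, hW₁⟩ := exists_open_nhds_one_mul_subset hV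
  obtain ⟨W₂, hW₂o, hW₂1, hW₂⟩ := exists_open_nhds_one_mul_subset (hW₁o.mem_nhds hW₁1)
  refine ⟨W₂ ∩ W₂⁻¹, hW₂o.inter hW₂o.inv, ⟨hW₂1, by simpa using hW₂1⟩, ?_, ?_⟩
  · simp [Set.inter_inv, Set.inter_comm]
  · have hsub : W₂ ∩ W₂⁻¹ ⊆ W₂ := Set.inter_subset_left
    have h1 : (W₂ ∩ W₂⁻¹) * (W₂ ∩ W₂⁻¹) ⊆ W₁ :=
      (Set.mul_subset_mul hsub hsub).trans hW₂
    calc (W₂ ∩ W₂⁻¹) * (W₂ ∩ W₂⁻¹) * (W₂ ∩ W₂⁻¹) * (W₂ ∩ W₂⁻¹)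
        = ((W₂ ∩ W₂⁻¹) * (W₂ ∩ W₂⁻¹)) * ((W₂ ∩ W₂⁻¹) * (W₂ ∩ W₂⁻¹)) := by
          rw [mul_assoc, mul_assoc]
      _ ⊆ W₁ * W₁ := Set.mul_subset_mul h1 h1
      _ ⊆ V := hW₁

private lemma left_cover (S : Set G) (hopen : IsOpen S) (hone : (1 : G) ∈ S)
    (hpc : IsPseudocompact ↥S) {V : Set G} (hV : V ∈ 𝓝 (1 : G)) :
    ∃ K : Finset G, S ⊆ (K : Set G) * V := by
  classical
  by_contra hc
  push_neg at hc
  have hK : ∀ K : Finset G, ∃ s, s ∈ S ∧ s ∉ (K : Set G) * V := by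
    intro K
    obtain ⟨s, hs, hs'⟩ := Set.not_subset.1 (hc K)
    exact ⟨s, hs, hs'⟩
  choose φ hφS hφV using hK
  obtain ⟨A, hAo, hA1, hAsymm, hA4⟩ := exists_symm_pow4_subset hV
  set W : Set G := A ∩ S with hWdef
  have hWo : IsOpen W := hAo.inter hopen
  have hW1 : (1 : G) ∈ W := ⟨hA1, hone⟩
  have hWA : W ⊆ A := Set.inter_subset_left
  -- the sequence of separated points
  let D : ℕ → Finset G := fun n => Nat.rec (motive := fun _ => Finset G) ∅ (fun _ Dn => insert (φ Dn) Dn) n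
  let d : ℕ → G := fun n => φ (D n)
  have hdS : ∀ n, d n ∈ S := fun n => hφS (D n)
  have hdV : ∀ n, d n ∉ (D n : Set G) * V := by
    intro n
    show φ (D n) ∉ (↑(D n) : Set G) * V
    exact hφV (D n)
  have hDsucc : ∀ n, D (n + 1) = insert (d n) (D n) := fun n => rfl
  have hDmono : ∀ m n, m ≤ n → D m ⊆ D n := by
    intro m n h
    induction h with
    | refl => exact Finset.Subset.refl _
    | step _ ih => exact ih.trans (by rw [hDsucc]; exact Finset.subset_insert _ _)
  have hdD : ∀ m n, m < n → d m ∈ D n := by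
    intro m n h
    exact hDmono (m + 1) n h (by rw [hDsucc]; exact Finset.mem_insert_self _ _)
  have hA4inv : (A * A * A * A)⁻¹ = A * A * A * A := by
    simp only [mul_inv_rev, hAsymm]
    rw [mul_assoc, mul_assoc]
  have hsep0 : ∀ m n, m < n → (d m)⁻¹ * d n ∉ A * A * A * A := by
    intro m n h hmem
    apply hdV n
    have : d n = d m * ((d m)⁻¹ * d n) := by group
    rw [this]
    exact Set.mul_mem_mul (hdD m n h) (hA4 hmem)
  have hsep : ∀ m n, m ≠ n → (d m)⁻¹ * d n ∉ A * A * A * A := by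
    intro m n hmn hmem
    rcases lt_or_gt_of_ne hmn with h | h
    · exact hsep0 m n h hmem
    · apply hsep0 n m h
      have : (d n)⁻¹ * d m = ((d m)⁻¹ * d n)⁻¹ := by group
      rw [this, ← hA4inv]
      exact Set.inv_mem_inv.2 hmem
  -- key discreteness claim
  have key : ∀ x : G, ∀ m n : ℕ, ((x • W) ∩ (d m • W)).Nonempty →
      ((x • W) ∩ (d n • W)).Nonempty → m = n := by
    intro x m n ⟨y, hy1, hy2⟩ ⟨z, hz1, hz2⟩
    obtain ⟨a, haW, ha⟩ := hy1
    obtain ⟨b, hbW, hb⟩ := hy2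
    obtain ⟨c, hcW, hc⟩ := hz1
    obtain ⟨e, heW, he⟩ := hz2
    simp only [smul_eq_mul] at ha hb hc he
    have h1 : x * a = d m * b := by rw [ha, hb]
    have h2 : x * c = d n * e := by rw [hc, he]
    have hmn : (d m)⁻¹ * d n = b * a⁻¹ * c * e⁻¹ := by
      have e1 : x = d m * b * a⁻¹ := by rw [← h1]; group
      have e2 : d n = x * c * e⁻¹ := by rw [h2]; group
      rw [e2, e1]; group
    by_contra hne
    apply hsep m n hne
    rw [hmn]
    have hainv : a⁻¹ ∈ A := by rw [← hAsymm]; exact Set.inv_mem_inv.2 (hWA haW)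
    have heinv : e⁻¹ ∈ A := by rw [← hAsymm]; exact Set.inv_mem_inv.2 (hWA heW)
    exact Set.mul_mem_mul (Set.mul_mem_mul (Set.mul_mem_mul (hWA hbW) hainv) (hWA hcW)) heinv
  -- build an unbounded continuous function
  obtain ⟨hreg, _ht1, hbdd⟩ := hpc
  have hdself : ∀ n, d n ∈ d n • W :=
    fun n => ⟨1, hW1, by simp⟩
  let p : ℕ → ↥S := fun n => ⟨d n, hdS n⟩
  have hUo : ∀ n, IsOpen ((Subtype.val : ↥S → G) ⁻¹' (d n • W)) :=
    fun n => (hWo.smul (d n)).preimage continuous_subtype_val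
  have hcr : ∀ n, ∃ f : ↥S → unitInterval, Continuous f ∧ f (p n) = 0 ∧
      Set.EqOn f 1 ((Subtype.val ⁻¹' (d n • W))ᶜ) := by
    intro n
    exact hreg.completely_regular (p n) _ (hUo n).isClosed_compl
      (fun h => h (hdself n))
  choose f hfc hf0 hf1 using hcr
  let g : ℕ → ↥S → ℝ := fun n s => 1 - (f n s : ℝ)
  have hgc : ∀ n, Continuous (g n) :=
    fun n => continuous_const.sub (continuous_subtype_val.comp (hfc n))
  have hgzero : ∀ n (s : ↥S), (s : G) ∉ d n • W → g n s = 0 := by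
    intro n s hs
    have : f n s = 1 := hf1 n hs
    simp [g, this]
  have hgone : ∀ n, g n (p n) = 1 := by
    intro n
    simp [g, hf0 n]
  set F : ↥S → ℝ := fun s => ∑' n : ℕ, (n : ℝ) * g n s with hFdef
  have hFeval : ∀ n, F (p n) = n := by
    intro n
    have h1 : F (p n) = (n : ℝ) * g n (p n) := by
      simp only [hFdef]
      apply tsum_eq_single
      intro m hm
      have hns : (p n : G) ∉ d m • W := by
        intro hmem
        exact hm (key (d n) m n ⟨d n, hdself n, hmem⟩ ⟨d n, hdself n, hdself n⟩)
      rw [hgzero m _ hns, mul_zero]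
    rw [h1, hgone n, mul_one]
  have hFcont : Continuous F := by
    rw [continuous_iff_continuousAt]
    intro x
    have hxW : (x : G) ∈ (x : G) • W := ⟨1, hW1, by simp⟩
    have hN : (Subtype.val : ↥S → G) ⁻¹' ((x : G) • W) ∈ 𝓝 x :=
      continuous_subtype_val.continuousAt.preimage_mem_nhds
        ((hWo.smul (x : G)).mem_nhds hxW)
    by_cases hex : ∃ n, (((x : G) • W) ∩ (d n • W)).Nonempty
    · obtain ⟨n, hn⟩ := hex
      have heq : F =ᶠ[𝓝 x] fun s => (n : ℝ) * g n s := by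
        filter_upwards [hN] with s hs
        simp only [hFdef]
        apply tsum_eq_single
        intro m hm
        have hns : (s : G) ∉ d m • W := by
          intro hmem
          exact hm (key (x : G) m n ⟨s, hs, hmem⟩ hn)
        rw [hgzero m s hns, mul_zero]
      exact ((continuous_const.mul (hgc n)).continuousAt).congr heq.symm
    · push_neg at hex
      have heq : F =ᶠ[𝓝 x] fun _ => (0 : ℝ) := by
        filter_upwards [hN] with s hs
        have hall : ∀ m : ℕ, (m : ℝ) * g m s = 0 := by
          intro m
          have hns : (s : G) ∉ d m • W := by
            intro hmem
            exact Set.eq_empty_iff_forall_notMem.1 (hex m) _ ⟨hs, hmem⟩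
          rw [hgzero m s hns, mul_zero]
        simp only [hFdef]
        calc (∑' m : ℕ, (m : ℝ) * g m s) = ∑' _ : ℕ, (0 : ℝ) := tsum_congr hall
          _ = 0 := tsum_zero
      exact continuousAt_const.congr heq.symm
  obtain ⟨M, hM⟩ := hbdd F hFcont
  obtain ⟨n, hn⟩ := exists_nat_gt M
  have := hM (p n)
  rw [hFeval n] at this
  have hnn : (n : ℝ) ≤ M := le_trans (le_abs_self _) this
  linarith

private lemma right_cover (S : Set G) (hopen : IsOpen S) (hone : (1 : G) ∈ S)
    (hpc : IsPseudocompact ↥S) {V : Set G} (hV : V ∈ 𝓝 (1 : G)) :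
    ∃ K : Finset G, S ⊆ V * (K : Set G) := by
  classical
  by_contra hc
  push_neg at hc
  have hK : ∀ K : Finset G, ∃ s, s ∈ S ∧ s ∉ V * (K : Set G) := by
    intro K
    obtain ⟨s, hs, hs'⟩ := Set.not_subset.1 (hc K)
    exact ⟨s, hs, hs'⟩
  choose φ hφS hφV using hK
  obtain ⟨A, hAo, hA1, hAsymm, hA4⟩ := exists_symm_pow4_subset hV
  set W : Set G := A ∩ S with hWdef
  have hWo : IsOpen W := hAo.inter hopen
  have hW1 : (1 : G) ∈ W := ⟨hA1, hone⟩
  have hWA : W ⊆ A := Set.inter_subset_left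
  let D : ℕ → Finset G := fun n => Nat.rec (motive := fun _ => Finset G) ∅ (fun _ Dn => insert (φ Dn) Dn) n
  let d : ℕ → G := fun n => φ (D n)
  have hdS : ∀ n, d n ∈ S := fun n => hφS (D n)
  have hdV : ∀ n, d n ∉ V * (D n : Set G) := by
    intro n
    show φ (D n) ∉ V * (↑(D n) : Set G)
    exact hφV (D n)
  have hDsucc : ∀ n, D (n + 1) = insert (d n) (D n) := fun n => rfl
  have hDmono : ∀ m n, m ≤ n → D m ⊆ D n := by
    intro m n h
    induction h with
    | refl => exact Finset.Subset.refl _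
    | step _ ih => exact ih.trans (by rw [hDsucc]; exact Finset.subset_insert _ _)
  have hdD : ∀ m n, m < n → d m ∈ D n := by
    intro m n h
    exact hDmono (m + 1) n h (by rw [hDsucc]; exact Finset.mem_insert_self _ _)
  have hA4inv : (A * A * A * A)⁻¹ = A * A * A * A := by
    simp only [mul_inv_rev, hAsymm]
    rw [mul_assoc, mul_assoc]
  have hsep0 : ∀ m n, m < n → d n * (d m)⁻¹ ∉ A * A * A * A := by
    intro m n h hmem
    apply hdV n
    have : d n = (d n * (d m)⁻¹) * d m := by group
    rw [this]
    exact Set.mul_mem_mul (hA4 hmem) (hdD m n h)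
  have hsep : ∀ m n, m ≠ n → d n * (d m)⁻¹ ∉ A * A * A * A := by
    intro m n hmn hmem
    rcases lt_or_gt_of_ne hmn with h | h
    · exact hsep0 m n h hmem
    · apply hsep0 n m h
      have : d m * (d n)⁻¹ = (d n * (d m)⁻¹)⁻¹ := by group
      rw [this, ← hA4inv]
      exact Set.inv_mem_inv.2 hmem
  -- key discreteness claim, now with right translates `W * {x}`
  have key : ∀ x : G, ∀ m n : ℕ, ((W * {x}) ∩ (W * {d m})).Nonempty →
      ((W * {x}) ∩ (W * {d n})).Nonempty → m = n := by
    intro x m n ⟨y, hy1, hy2⟩ ⟨z, hz1, hz2⟩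
    rw [Set.mul_singleton] at hy1 hy2 hz1 hz2
    obtain ⟨a, haW, ha⟩ := hy1
    obtain ⟨b, hbW, hb⟩ := hy2
    obtain ⟨c, hcW, hc⟩ := hz1
    obtain ⟨e, heW, he⟩ := hz2
    simp only at ha hb hc he
    have h1 : a * x = b * d m := by rw [ha, hb]
    have h2 : c * x = e * d n := by rw [hc, he]
    have hmn : d n * (d m)⁻¹ = e⁻¹ * c * a⁻¹ * b := by
      have e1 : x = a⁻¹ * (b * d m) := by rw [← h1]; group
      have e2 : d n = e⁻¹ * (c * x) := by rw [h2]; group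
      rw [e2, e1]; group
    by_contra hne
    apply hsep m n hne
    rw [hmn]
    have hainv : a⁻¹ ∈ A := by rw [← hAsymm]; exact Set.inv_mem_inv.2 (hWA haW)
    have heinv : e⁻¹ ∈ A := by rw [← hAsymm]; exact Set.inv_mem_inv.2 (hWA heW)
    exact Set.mul_mem_mul (Set.mul_mem_mul (Set.mul_mem_mul heinv (hWA hcW)) hainv) (hWA hbW)
  obtain ⟨hreg, _ht1, hbdd⟩ := hpc
  have hWxo : ∀ x : G, IsOpen (W * {x}) := by
    intro x
    rw [Set.mul_singleton]
    exact isOpenMap_mul_right x W hWo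
  have hdself : ∀ n, d n ∈ W * {d n} := by
    intro n
    rw [Set.mul_singleton]
    exact ⟨1, hW1, by simp⟩
  let p : ℕ → ↥S := fun n => ⟨d n, hdS n⟩
  have hUo : ∀ n, IsOpen ((Subtype.val : ↥S → G) ⁻¹' (W * {d n})) :=
    fun n => (hWxo (d n)).preimage continuous_subtype_val
  have hcr : ∀ n, ∃ f : ↥S → unitInterval, Continuous f ∧ f (p n) = 0 ∧
      Set.EqOn f 1 ((Subtype.val ⁻¹' (W * {d n}))ᶜ) := by
    intro n
    exact hreg.completely_regular (p n) _ (hUo n).isClosed_compl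
      (fun h => h (hdself n))
  choose f hfc hf0 hf1 using hcr
  let g : ℕ → ↥S → ℝ := fun n s => 1 - (f n s : ℝ)
  have hgc : ∀ n, Continuous (g n) :=
    fun n => continuous_const.sub (continuous_subtype_val.comp (hfc n))
  have hgzero : ∀ n (s : ↥S), (s : G) ∉ W * {d n} → g n s = 0 := by
    intro n s hs
    have : f n s = 1 := hf1 n hs
    simp [g, this]
  have hgone : ∀ n, g n (p n) = 1 := by
    intro n
    simp [g, hf0 n]
  set F : ↥S → ℝ := fun s => ∑' n : ℕ, (n : ℝ) * g n s with hFdef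
  have hFeval : ∀ n, F (p n) = n := by
    intro n
    have h1 : F (p n) = (n : ℝ) * g n (p n) := by
      simp only [hFdef]
      apply tsum_eq_single
      intro m hm
      have hns : (p n : G) ∉ W * {d m} := by
        intro hmem
        exact hm (key (d n) m n ⟨d n, hdself n, hmem⟩ ⟨d n, hdself n, hdself n⟩)
      rw [hgzero m _ hns, mul_zero]
    rw [h1, hgone n, mul_one]
  have hFcont : Continuous F := by
    rw [continuous_iff_continuousAt]
    intro x
    have hxW : (x : G) ∈ W * {(x : G)} := by
      rw [Set.mul_singleton]; exact ⟨1, hW1, by simp⟩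
    have hN : (Subtype.val : ↥S → G) ⁻¹' (W * {(x : G)}) ∈ 𝓝 x :=
      continuous_subtype_val.continuousAt.preimage_mem_nhds
        ((hWxo (x : G)).mem_nhds hxW)
    by_cases hex : ∃ n, ((W * {(x : G)}) ∩ (W * {d n})).Nonempty
    · obtain ⟨n, hn⟩ := hex
      have heq : F =ᶠ[𝓝 x] fun s => (n : ℝ) * g n s := by
        filter_upwards [hN] with s hs
        simp only [hFdef]
        apply tsum_eq_single
        intro m hm
        have hns : (s : G) ∉ W * {d m} := by
          intro hmem
          exact hm (key (x : G) m n ⟨s, hs, hmem⟩ hn)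
        rw [hgzero m s hns, mul_zero]
      exact ((continuous_const.mul (hgc n)).continuousAt).congr heq.symm
    · push_neg at hex
      have heq : F =ᶠ[𝓝 x] fun _ => (0 : ℝ) := by
        filter_upwards [hN] with s hs
        have hall : ∀ m : ℕ, (m : ℝ) * g m s = 0 := by
          intro m
          have hns : (s : G) ∉ W * {d m} := by
            intro hmem
            exact Set.eq_empty_iff_forall_notMem.1 (hex m) _ ⟨hs, hmem⟩
          rw [hgzero m s hns, mul_zero]
        simp only [hFdef]
        calc (∑' m : ℕ, (m : ℝ) * g m s) = ∑' _ : ℕ, (0 : ℝ) := tsum_congr hall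
          _ = 0 := tsum_zero
      exact continuousAt_const.congr heq.symm
  obtain ⟨M, hM⟩ := hbdd F hFcont
  obtain ⟨n, hn⟩ := exists_nat_gt M
  have := hM (p n)
  rw [hFeval n] at this
  have hnn : (n : ℝ) ≤ M := le_trans (le_abs_self _) this
  linarith

end Aux

/-- Every open pseudocompact submonoid of a Hausdorff topological group is precompact. -/
theorem stmt0 {G : Type*} [Group G] [TopologicalSpace G] [IsTopologicalGroup G] [T2Space G]
    (S : Set G) (hopen : IsOpen S) (hone : (1 : G) ∈ S) (hmul : S * S ⊆ S)
    (hpc : IsPseudocompact ↥S) : IsPrecompactIn S := by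
  clear hmul
  classical
  intro V hV
  obtain ⟨K₁, hK₁⟩ := left_cover S hopen hone hpc hV
  obtain ⟨K₂, hK₂⟩ := right_cover S hopen hone hpc hV
  refine ⟨K₁ ∪ K₂, ?_, ?_⟩
  · exact hK₁.trans (Set.mul_subset_mul_right (by simp [Finset.coe_union]))
  · exact hK₂.trans (Set.mul_subset_mul_left (by simp [Finset.coe_union]))
end

section
/- If A is a precompact subset of a Hausdorff topological group G and (x_n)_{n ∈ ω} is a sequence of elements of A, then the identity of G lies in the closure of the set { x_i · x_j⁻¹ : i < j, i, j ∈ ω }. -/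
open Pointwise

/-- If A is precompact and x_n ∈ A, then 1 ∈ closure {x_i * x_j⁻¹ : i < j}. -/
theorem stmt1 {G : Type*} [Group G] [TopologicalSpace G] [IsTopologicalGroup G] [T2Space G]
    (A : Set G) (hA : IsPrecompactIn A) (x : ℕ → G) (hx : ∀ n, x n ∈ A) :
    (1 : G) ∈ closure {g : G | ∃ i j : ℕ, i < j ∧ g = x i * (x j)⁻¹} := by
  rw [mem_closure_iff]
  intro O hO h1O
  obtain ⟨V, hV, hVsplit⟩ := exists_nhds_split_inv (hO.mem_nhds h1O)
  obtain ⟨K, -, hAVK⟩ := hA V hV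
  -- for each n, pick v n ∈ V, k n ∈ K with x n = v n * k n
  have hchoice : ∀ n : ℕ, ∃ p : G × G, p.1 ∈ V ∧ p.2 ∈ (K : Set G) ∧ p.1 * p.2 = x n := by
    intro n
    obtain ⟨v, hv, k, hk, hvk⟩ := hAVK (hx n)
    exact ⟨(v, k), hv, hk, hvk⟩
  choose p hpV hpK hpx using hchoice
  obtain ⟨a, b, hne, hab⟩ := Finite.exists_ne_map_eq_of_infinite
    (fun n => (⟨(p n).2, hpK n⟩ : (K : Set G)))
  have hab' : (p a).2 = (p b).2 := congrArg Subtype.val hab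
  -- wlog a < b
  rcases lt_or_gt_of_ne hne with h | h
  · refine ⟨x a * (x b)⁻¹, ?_, a, b, h, rfl⟩
    have : x a * (x b)⁻¹ = (p a).1 / (p b).1 := by
      rw [← hpx a, ← hpx b, hab']
      group
      simp [div_eq_mul_inv]
    rw [this]
    exact hVsplit _ (hpV a) _ (hpV b)
  · refine ⟨x b * (x a)⁻¹, ?_, b, a, h, rfl⟩
    have : x b * (x a)⁻¹ = (p b).1 / (p a).1 := by
      rw [← hpx a, ← hpx b, hab']
      group
      simp [div_eq_mul_inv]
    rw [this]
    exact hVsplit _ (hpV b) _ (hpV a)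
end

section
/- If S is a precompact subsemigroup of a Hausdorff topological group G, then the closure of S in G is a precompact subgroup of G. -/
open Pointwise

private lemma pow_mem_of_semigroup {G : Type*} [Group G] {S : Set G} (hmul : S * S ⊆ S)
    {s : G} (hs : s ∈ S) : ∀ n : ℕ, s ^ (n + 1) ∈ S := by
  intro n
  induction n with
  | zero => simpa using hs
  | succ k ih => rw [pow_succ]; exact hmul ⟨_, ih, _, hs, rfl⟩

/-- Key pigeonhole step: some positive power of `s` lies in any neighborhood of `1`. -/
private lemma small_pow {G : Type*} [Group G] [TopologicalSpace G] [IsTopologicalGroup G]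
    {S : Set G} (hmul : S * S ⊆ S) (hpre : IsPrecompactIn S)
    {s : G} (hs : s ∈ S) {U : Set G} (hU : U ∈ nhds 1) :
    ∃ k : ℕ, s ^ (k + 1) ∈ U := by
  obtain ⟨W, Wopen, hW1, hWW⟩ := exists_open_nhds_one_mul_subset hU
  have hWnhds : W ∈ nhds (1 : G) := Wopen.mem_nhds hW1
  set V : Set G := W ∩ W⁻¹ with hVdef
  have hV : V ∈ nhds (1 : G) := Filter.inter_mem hWnhds (inv_mem_nhds_one G hWnhds)
  obtain ⟨K, hKl, _⟩ := hpre V hV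
  have hch : ∀ n : ℕ, ∃ k, k ∈ K ∧ ∃ v ∈ V, k * v = s ^ (n + 1) := by
    intro n
    obtain ⟨k, hk, v, hv, hkv⟩ := hKl (pow_mem_of_semigroup hmul hs n)
    exact ⟨k, hk, v, hv, hkv⟩
  choose f hfK v hvV hfv using hch
  obtain ⟨i, hi, j, hj, hij, hfij⟩ :=
    Finset.exists_ne_map_eq_of_card_lt_of_maps_to
      (s := Finset.range (K.card + 1)) (t := K)
      (by simp) (fun n _ => hfK n)
  -- WLOG i < j
  rcases lt_or_gt_of_ne hij with h | h
  · refine ⟨j - i - 1, ?_⟩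
    have hd : (j - i - 1) + 1 = j - i := by omega
    have hpow : s ^ (j + 1) = s ^ (i + 1) * s ^ (j - i) := by
      rw [← pow_add]; congr 1; omega
    have : s ^ (j - i) = (v i)⁻¹ * v j := by
      have h1 := hfv i
      have h2 := hfv j
      rw [hfij] at h1
      have h3 : f j * (v i * s ^ (j - i)) = f j * v j := by
        rw [← mul_assoc, h1, ← hpow, h2]
      have h4 : v i * s ^ (j - i) = v j := mul_left_cancel h3
      rw [eq_inv_mul_iff_mul_eq]
      exact h4
    rw [hd, this]
    exact hWW ⟨(v i)⁻¹, (hvV i).2, v j, (hvV j).1, rfl⟩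
  · refine ⟨i - j - 1, ?_⟩
    have hd : (i - j - 1) + 1 = i - j := by omega
    have hpow : s ^ (i + 1) = s ^ (j + 1) * s ^ (i - j) := by
      rw [← pow_add]; congr 1; omega
    have : s ^ (i - j) = (v j)⁻¹ * v i := by
      have h1 := hfv i
      have h2 := hfv j
      rw [hfij] at h1
      have h3 : f j * (v j * s ^ (i - j)) = f j * v i := by
        rw [← mul_assoc, h2, ← hpow, h1]
      have h4 : v j * s ^ (i - j) = v i := mul_left_cancel h3
      rw [eq_inv_mul_iff_mul_eq]
      exact h4
    rw [hd, this]
    exact hWW ⟨(v j)⁻¹, (hvV j).2, v i, (hvV i).1, rfl⟩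

/-- The closure of a precompact subsemigroup is a precompact subgroup. -/
theorem stmt2 {G : Type*} [Group G] [TopologicalSpace G] [IsTopologicalGroup G] [T2Space G]
    (S : Set G) (hne : S.Nonempty) (hmul : S * S ⊆ S) (hpre : IsPrecompactIn S) :
    IsPrecompactIn (closure S) ∧ ∃ H : Subgroup G, (H : Set G) = closure S := by
  obtain ⟨s₀, hs₀⟩ := hne
  -- 1 ∈ closure S
  have hone : (1 : G) ∈ closure S := by
    rw [mem_closure_iff_nhds]
    intro U hU
    obtain ⟨k, hk⟩ := small_pow hmul hpre hs₀ hU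
    exact ⟨s₀ ^ (k + 1), hk, pow_mem_of_semigroup hmul hs₀ k⟩
  -- inverses of elements of S are in closure S
  have hinvS : ∀ s ∈ S, s⁻¹ ∈ closure S := by
    intro s hs
    have : s⁻¹ ∈ closure (closure S) := by
      rw [mem_closure_iff_nhds]
      intro W hW
      have hcont : Continuous fun x : G => x * s⁻¹ := continuous_mul_right _
      have hU : (fun x : G => x * s⁻¹) ⁻¹' W ∈ nhds (1 : G) := by
        apply hcont.continuousAt.preimage_mem_nhds
        simpa using hW
      obtain ⟨k, hk⟩ := small_pow hmul hpre hs hU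
      refine ⟨s ^ (k + 1) * s⁻¹, hk, ?_⟩
      have : s ^ (k + 1) * s⁻¹ = s ^ k := by rw [pow_succ]; group
      rw [this]
      cases k with
      | zero => simpa using hone
      | succ m => exact subset_closure (pow_mem_of_semigroup hmul hs m)
    rwa [closure_closure] at this
  -- closure S is closed under multiplication
  have hmulcl : ∀ x ∈ closure S, ∀ y ∈ closure S, x * y ∈ closure S := by
    intro x hx y hy
    have : x * y ∈ closure (S * S) :=
      map_mem_closure₂ continuous_mul hx hy fun a ha b hb => ⟨a, ha, b, hb, rfl⟩
    exact closure_mono hmul this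
  -- closure S is closed under inversion
  have hinvcl : ∀ x ∈ closure S, x⁻¹ ∈ closure S := by
    intro x hx
    have h1 : x⁻¹ ∈ (closure S)⁻¹ := by simpa using hx
    rw [inv_closure] at h1
    have h2 : closure S⁻¹ ⊆ closure S := by
      rw [← closure_closure (s := S)]
      apply closure_mono
      intro y hy
      rw [Set.mem_inv] at hy
      simpa using hinvS _ hy
    exact h2 h1
  constructor
  · -- precompactness of closure S
    intro U hU
    obtain ⟨W, Wopen, hW1, hWW⟩ := exists_open_nhds_one_mul_subset hU
    have hWnhds : W ∈ nhds (1 : G) := Wopen.mem_nhds hW1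
    set V : Set G := W ∩ W⁻¹ with hVdef
    have hV : V ∈ nhds (1 : G) := Filter.inter_mem hWnhds (inv_mem_nhds_one G hWnhds)
    obtain ⟨K, hKl, hKr⟩ := hpre V hV
    refine ⟨K, ?_, ?_⟩
    · intro x hx
      have hN : {y : G | x⁻¹ * y ∈ V} ∈ nhds x := by
        have : Continuous fun y : G => x⁻¹ * y := continuous_mul_left _
        apply this.continuousAt.preimage_mem_nhds
        simpa using hV
      obtain ⟨t, htN, htS⟩ := mem_closure_iff_nhds.mp hx _ hN
      -- x = t * (t⁻¹ * x), with t⁻¹ * x = (x⁻¹ * t)⁻¹ ∈ V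
      have hvt : (x⁻¹ * t)⁻¹ ∈ V := by
        have := htN
        simp only [Set.mem_setOf_eq] at this
        exact ⟨(Set.mem_inv.mp this.2), Set.inv_mem_inv.mpr this.1⟩
      obtain ⟨k, hk, w, hw, hkw⟩ := hKl htS
      refine Set.mem_mul.mpr ⟨k, hk, w * (x⁻¹ * t)⁻¹, hWW ⟨w, hw.1, _, hvt.1, rfl⟩, ?_⟩
      have hkw' : k * w = t := hkw
      rw [← mul_assoc, hkw']
      group
    · intro x hx
      have hN : {y : G | y * x⁻¹ ∈ V} ∈ nhds x := by
        have : Continuous fun y : G => y * x⁻¹ := continuous_mul_right _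
        apply this.continuousAt.preimage_mem_nhds
        simpa using hV
      obtain ⟨t, htN, htS⟩ := mem_closure_iff_nhds.mp hx _ hN
      have hvt : (t * x⁻¹)⁻¹ ∈ V := by
        have := htN
        simp only [Set.mem_setOf_eq] at this
        exact ⟨(Set.mem_inv.mp this.2), Set.inv_mem_inv.mpr this.1⟩
      obtain ⟨w, hw, k, hk, hkw⟩ := hKr htS
      refine Set.mem_mul.mpr ⟨(t * x⁻¹)⁻¹ * w, hWW ⟨_, hvt.1, w, hw.1, rfl⟩, k, hk, ?_⟩
      have hkw' : w * k = t := hkw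
      rw [mul_assoc, hkw']
      group
  · exact ⟨{ carrier := closure S
             mul_mem' := fun ha hb => hmulcl _ ha _ hb
             one_mem' := hone
             inv_mem' := fun ha => hinvcl _ ha }, rfl⟩
end

section
/- The closure of every subsemigroup of a precompact (totally bounded) Hausdorff topological group is a subgroup. -/
open Pointwise

/-- The closure of every subsemigroup of a precompact Hausdorff group is a subgroup. -/
theorem stmt4 {G : Type*} [Group G] [TopologicalSpace G] [IsTopologicalGroup G] [T2Space G]
    (hG : ∀ V ∈ nhds (1 : G), ∃ K : Finset G, (Set.univ : Set G) ⊆ (K : Set G) * V)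
    (S : Set G) (hne : S.Nonempty) (hmul : S * S ⊆ S) :
    ∃ H : Subgroup G, (H : Set G) = closure S := by
  -- powers stay in S
  have hpow : ∀ s ∈ S, ∀ n : ℕ, s ^ (n + 1) ∈ S := by
    intro s hs n
    induction n with
    | zero => simpa using hs
    | succ n ih =>
      have : s ^ (n + 1) * s ∈ S * S := Set.mul_mem_mul ih hs
      rw [← pow_succ] at this
      exact hmul this
  -- key: high powers of elements of S come back near 1
  have key : ∀ s ∈ S, ∀ V ∈ nhds (1 : G), ∃ n : ℕ, 2 ≤ n ∧ s ^ n ∈ V := by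
    intro s hs V hV
    -- split the neighborhood: U with U⁻¹ * U ⊆ V
    obtain ⟨U, hU, hUsub⟩ : ∃ U ∈ nhds (1 : G), ∀ a ∈ U, ∀ b ∈ U, a⁻¹ * b ∈ V := by
      have hc : ContinuousAt (fun p : G × G => p.1⁻¹ * p.2) (1, 1) :=
        (continuousAt_fst.inv.mul continuousAt_snd)
      have h1 : (fun p : G × G => p.1⁻¹ * p.2) ⁻¹' V ∈ nhds ((1 : G), (1 : G)) :=
        hc (by simpa using hV)
      rw [nhds_prod_eq, Filter.mem_prod_iff] at h1
      obtain ⟨U1, hU1, U2, hU2, hsub⟩ := h1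
      exact ⟨U1 ∩ U2, Filter.inter_mem hU1 hU2,
        fun a ha b hb => hsub (Set.mk_mem_prod ha.1 hb.2)⟩
    obtain ⟨K, hK⟩ := hG U hU
    -- for each i, s ^ (2*(i+1)) ∈ k * U for some k ∈ K
    have hchoice : ∀ i : ℕ, ∃ k : G, k ∈ K ∧ ∃ u ∈ U, s ^ (2 * (i + 1)) = k * u := by
      intro i
      have := hK (Set.mem_univ (s ^ (2 * (i + 1))))
      obtain ⟨k, hk, u, hu, huv⟩ := this
      exact ⟨k, hk, u, hu, huv.symm⟩
    choose k hkK u hu heq using hchoice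
    -- pigeonhole on Fin (K.card + 1)
    have hcard : Fintype.card {x // x ∈ K} < Fintype.card (Fin (K.card + 1)) := by
      simp [Fintype.card_coe]
    obtain ⟨i, j, hij, hfij⟩ :=
      Fintype.exists_ne_map_eq_of_card_lt
        (fun i : Fin (K.card + 1) => (⟨k i.1, hkK i.1⟩ : {x // x ∈ K})) hcard
    -- wlog i < j
    rcases hij.lt_or_gt with h | h
    · refine ⟨2 * (j.1 + 1) - 2 * (i.1 + 1), ?_, ?_⟩
      · omega
      · have hkk : k i.1 = k j.1 := congrArg Subtype.val hfij
        have hpoweq : s ^ (2 * (i.1 + 1)) * s ^ (2 * (j.1 + 1) - 2 * (i.1 + 1))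
            = s ^ (2 * (j.1 + 1)) := by
          rw [← pow_add]; congr 1; omega
        have : s ^ (2 * (j.1 + 1) - 2 * (i.1 + 1))
            = (u i.1)⁻¹ * (u j.1) := by
          have h1 := heq i.1
          have h2 := heq j.1
          rw [hkk] at h1
          have : (k j.1 * u i.1) * s ^ (2 * (j.1 + 1) - 2 * (i.1 + 1))
              = k j.1 * u j.1 := by rw [← h1, ← h2, hpoweq]
          calc s ^ (2 * (j.1 + 1) - 2 * (i.1 + 1))
              = (u i.1)⁻¹ * ((k j.1)⁻¹ * ((k j.1 * u i.1)
                * s ^ (2 * (j.1 + 1) - 2 * (i.1 + 1)))) := by group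
            _ = (u i.1)⁻¹ * ((k j.1)⁻¹ * (k j.1 * u j.1)) := by rw [this]
            _ = (u i.1)⁻¹ * u j.1 := by group
        rw [this]
        exact hUsub _ (hu i.1) _ (hu j.1)
    · refine ⟨2 * (i.1 + 1) - 2 * (j.1 + 1), ?_, ?_⟩
      · omega
      · have hkk : k j.1 = k i.1 := (congrArg Subtype.val hfij).symm
        have hpoweq : s ^ (2 * (j.1 + 1)) * s ^ (2 * (i.1 + 1) - 2 * (j.1 + 1))
            = s ^ (2 * (i.1 + 1)) := by
          rw [← pow_add]; congr 1; omega
        have : s ^ (2 * (i.1 + 1) - 2 * (j.1 + 1))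
            = (u j.1)⁻¹ * (u i.1) := by
          have h1 := heq j.1
          have h2 := heq i.1
          rw [hkk] at h1
          have : (k i.1 * u j.1) * s ^ (2 * (i.1 + 1) - 2 * (j.1 + 1))
              = k i.1 * u i.1 := by rw [← h1, ← h2, hpoweq]
          calc s ^ (2 * (i.1 + 1) - 2 * (j.1 + 1))
              = (u j.1)⁻¹ * ((k i.1)⁻¹ * ((k i.1 * u j.1)
                * s ^ (2 * (i.1 + 1) - 2 * (j.1 + 1)))) := by group
            _ = (u j.1)⁻¹ * ((k i.1)⁻¹ * (k i.1 * u i.1)) := by rw [this]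
            _ = (u j.1)⁻¹ * u i.1 := by group
        rw [this]
        exact hUsub _ (hu j.1) _ (hu i.1)
  -- 1 ∈ closure S
  obtain ⟨s₀, hs₀⟩ := hne
  have hone : (1 : G) ∈ closure S := by
    rw [mem_closure_iff_nhds]
    intro V hV
    obtain ⟨n, hn2, hnV⟩ := key s₀ hs₀ V hV
    exact ⟨s₀ ^ n, hnV, by
      have := hpow s₀ hs₀ (n - 1)
      rwa [Nat.sub_add_cancel (by omega)] at this⟩
  -- s⁻¹ ∈ closure S for s ∈ S
  have hinvS : ∀ s ∈ S, s⁻¹ ∈ closure S := by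
    intro s hs
    rw [mem_closure_iff_nhds]
    intro V hV
    have hW : (fun x => s⁻¹ * x) ⁻¹' V ∈ nhds (1 : G) := by
      apply ContinuousAt.preimage_mem_nhds (by fun_prop)
      simpa using hV
    obtain ⟨n, hn2, hnW⟩ := key s hs _ hW
    refine ⟨s ^ (n - 1), ?_, ?_⟩
    · have : s⁻¹ * s ^ n ∈ V := hnW
      have hpow' : s⁻¹ * s ^ n = s ^ (n - 1) := by
        rw [← pow_sub_one_mul (by omega : n ≠ 0) s]
        group
      rwa [hpow'] at this
    · have := hpow s hs (n - 2)
      rwa [show n - 2 + 1 = n - 1 by omega] at this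
  -- inversion preserved by closure
  have hinv : ∀ x ∈ closure S, x⁻¹ ∈ closure S := by
    intro x hx
    have hC : closure S ⊆ {y : G | y⁻¹ ∈ closure S} := by
      apply closure_minimal hinvS
      exact (isClosed_closure).preimage continuous_inv
    exact hC hx
  -- multiplication preserved by closure
  have hmulc : ∀ x ∈ closure S, ∀ y ∈ closure S, x * y ∈ closure S := by
    intro x hx y hy
    let S' : Subsemigroup G := ⟨S, fun {a b} ha hb => hmul (Set.mul_mem_mul ha hb)⟩
    exact S'.topologicalClosure.mul_mem' hx hy
  exact ⟨{ carrier := closure S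
           one_mem' := hone
           mul_mem' := fun {a b} ha hb => hmulc a ha b hb
           inv_mem' := fun {a} ha => hinv a ha }, rfl⟩
end

section
/- Every element of a precompact subsemigroup S of a Hausdorff topological group has its inverse lying in the closure of S; more precisely, for each x in a precompact subsemigroup S, x⁻¹ ∈ closure {x, x², x³, ...}. -/
open Pointwise

/-- For each x in a precompact subsemigroup S, x⁻¹ lies in closure {x, x², x³, ...}. -/
theorem stmt5 {G : Type*} [Group G] [TopologicalSpace G] [IsTopologicalGroup G] [T2Space G]
    (S : Set G) (hne : S.Nonempty) (hmul : S * S ⊆ S) (hpre : IsPrecompactIn S)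
    (x : G) (hx : x ∈ S) :
    x⁻¹ ∈ closure {y : G | ∃ n : ℕ, 0 < n ∧ y = x ^ n} := by
  have hxpow : ∀ n : ℕ, x ^ (n + 1) ∈ S := by
    intro n
    induction n with
    | zero => simpa using hx
    | succ n ih =>
      have h : x ^ (n + 1) * x ∈ S * S := Set.mul_mem_mul ih hx
      have := hmul h
      simpa [pow_succ] using this
  rw [mem_closure_iff_nhds]
  intro U hU
  -- V := preimage of U under left multiplication by x⁻¹; V ∈ 𝓝 1
  set V : Set G := (fun g => x⁻¹ * g) ⁻¹' U with hVdef
  have hV : V ∈ nhds (1 : G) := by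
    have hc : ContinuousAt (fun g => x⁻¹ * g) (1 : G) :=
      (continuous_const.mul continuous_id).continuousAt
    exact hc.preimage_mem_nhds (by simpa using hU)
  obtain ⟨W, hW, hWmul⟩ := exists_nhds_one_split hV
  -- symmetrize
  set W1 : Set G := W ∩ (fun g : G => g⁻¹) ⁻¹' W with hW1def
  have hW1 : W1 ∈ nhds (1 : G) := by
    refine Filter.inter_mem hW ?_
    have hc : ContinuousAt (fun g : G => g⁻¹) (1 : G) := continuous_inv.continuousAt
    exact hc.preimage_mem_nhds (by simpa using hW)
  obtain ⟨K, hK1, _⟩ := hpre W1 hW1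
  have hmem : ∀ n : ℕ, ∃ k ∈ K, ∃ w ∈ W1, k * w = x ^ (2 * n + 2) := by
    intro n
    have : x ^ (2 * n + 2) ∈ S := by
      have := hxpow (2 * n + 1)
      simpa [Nat.add_assoc] using this
    exact Set.mem_mul.mp (hK1 this)
  choose k hk w hw hkw using hmem
  have key : ∀ m n : ℕ, m < n → k m = k n →
      (U ∩ {y : G | ∃ n : ℕ, 0 < n ∧ y = x ^ n}).Nonempty := by
    intro m n hmn hkeq
    set d : ℕ := n - m with hd
    have hdpos : 0 < d := Nat.sub_pos_of_lt hmn
    have hpow_eq : x ^ (2 * m + 2) * x ^ (2 * d) = x ^ (2 * n + 2) := by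
      rw [← pow_add]; congr 1; omega
    have heq : x ^ (2 * d) = (w m)⁻¹ * w n := by
      have h1 : (k m * w m) * x ^ (2 * d) = k n * w n := by
        rw [hkw m, hkw n, hpow_eq]
      rw [hkeq, mul_assoc] at h1
      have h2 : w m * x ^ (2 * d) = w n := mul_left_cancel h1
      rw [eq_inv_mul_iff_mul_eq]
      exact h2
    have hVmem : x ^ (2 * d) ∈ V := by
      rw [heq]
      have h1 : (w m)⁻¹ ∈ W := (hw m).2
      have h2 : w n ∈ W := (hw n).1
      exact hWmul _ h1 _ h2
    have hUmem : x⁻¹ * x ^ (2 * d) ∈ U := hVmem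
    have hexp : x⁻¹ * x ^ (2 * d) = x ^ (2 * d - 1) := by
      have : 2 * d = (2 * d - 1) + 1 := by omega
      rw [this, pow_succ']
      exact inv_mul_cancel_left x _
    refine ⟨x ^ (2 * d - 1), ?_, 2 * d - 1, by omega, rfl⟩
    rw [← hexp]; exact hUmem
  have : ∃ m n : ℕ, m ≠ n ∧ (⟨k m, hk m⟩ : {g // g ∈ K}) = ⟨k n, hk n⟩ :=
    Finite.exists_ne_map_eq_of_infinite _
  obtain ⟨m, n, hmn, heq⟩ := this
  have hkeq : k m = k n := congrArg Subtype.val heq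
  rcases lt_or_gt_of_ne hmn with h | h
  · exact key m n h hkeq
  · exact key n m h hkeq.symm
end

section
/- Every open precompact subsemigroup of a Hausdorff topological group G is a closed subgroup of G. -/
open Pointwise

theorem aux_closure_mul {G : Type*} [Group G] [TopologicalSpace G] [IsTopologicalGroup G]
    (S : Set G) (hopen : IsOpen S) (hmul : S * S ⊆ S) :
    closure S * S ⊆ S := by
  rintro x ⟨t, ht, s, hs, rfl⟩
  have hN : {x : G | x⁻¹ * (t * s) ∈ S} ∈ nhds t := by
    have : ContinuousAt (fun x : G => x⁻¹ * (t * s)) t :=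
      (continuous_inv.mul continuous_const).continuousAt
    exact this.preimage_mem_nhds (hopen.mem_nhds (by simpa using hs))
  obtain ⟨x, hx1, hx2⟩ := mem_closure_iff_nhds.mp ht _ hN
  have : x * (x⁻¹ * (t * s)) ∈ S := hmul (Set.mul_mem_mul hx2 hx1)
  simpa using this

theorem aux_pow_near_one {G : Type*} [Group G] [TopologicalSpace G] [IsTopologicalGroup G]
    {S : Set G} (hpre : IsPrecompactIn S) {a : G} (hpow : ∀ n : ℕ, 1 ≤ n → a ^ n ∈ S)
    {W : Set G} (hW : W ∈ nhds 1) : ∃ p : ℕ, 2 ≤ p ∧ a ^ p ∈ W := by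
  obtain ⟨V₀, hV₀, hV₀W⟩ := exists_nhds_one_split hW
  have hV₀inv : V₀⁻¹ ∈ nhds (1 : G) := by
    have := (continuous_inv (G := G)).continuousAt (x := 1) |>.preimage_mem_nhds
      (by simpa using hV₀)
    exact this
  set V : Set G := V₀ ∩ V₀⁻¹ with hVdef
  have hV : V ∈ nhds (1 : G) := Filter.inter_mem hV₀ hV₀inv
  obtain ⟨K, hK, -⟩ := hpre V hV
  have h : ∀ n : ℕ, ∃ k ∈ (K : Set G), ∃ v ∈ V, k * v = a ^ (2 * (n + 1)) := by
    intro n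
    have := hK (hpow (2 * (n + 1)) (by omega))
    rwa [Set.mem_mul] at this
  choose k hk v hv hkv using h
  obtain ⟨n, -, m, -, hne, heq⟩ := Finset.exists_ne_map_eq_of_card_lt_of_maps_to
    (s := Finset.range (K.card + 1)) (t := K)
    (by simp) (fun n _ => by exact_mod_cast hk n)
  wlog hlt : n < m generalizing n m
  · exact this m n hne.symm heq.symm (by omega)
  refine ⟨2 * (m - n), by omega, ?_⟩
  have hpadd : a ^ (2 * (n + 1)) * a ^ (2 * (m - n)) = a ^ (2 * (m + 1)) := by
    rw [← pow_add]; congr 1; omega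
  have : a ^ (2 * (m - n)) = (v n)⁻¹ * v m := by
    have h1 : a ^ (2 * (m - n)) = (a ^ (2 * (n + 1)))⁻¹ * a ^ (2 * (m + 1)) := by
      rw [← hpadd]; group
    rw [h1, ← hkv n, ← hkv m, heq]
    group
  rw [this]
  exact hV₀W _ (((hv n).2 : v n ∈ V₀⁻¹)) _ (hv m).1

/-- Every open precompact subsemigroup of a Hausdorff topological group is a closed subgroup. -/
theorem stmt6 {G : Type*} [Group G] [TopologicalSpace G] [IsTopologicalGroup G] [T2Space G]
    (S : Set G) (hopen : IsOpen S) (hne : S.Nonempty) (hmul : S * S ⊆ S)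
    (hpre : IsPrecompactIn S) :
    IsClosed S ∧ ∃ H : Subgroup G, (H : Set G) = S := by
  have hclos := aux_closure_mul S hopen hmul
  have hpowS : ∀ b ∈ S, ∀ n : ℕ, 1 ≤ n → b ^ n ∈ S := by
    intro b hb n hn
    induction n with
    | zero => omega
    | succ n ih =>
      rcases Nat.lt_or_ge 1 (n + 1) with h | h
      · have hn1 : b ^ n ∈ S := ih (by omega)
        have : b ^ n * b ∈ S := hmul (Set.mul_mem_mul hn1 hb)
        simpa [pow_succ] using this
      · have : n = 0 := by omega
        simpa [this] using hb
  have hinvclos : ∀ b ∈ S, b⁻¹ ∈ closure S := by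
    intro b hb
    rw [mem_closure_iff_nhds]
    intro N hN
    have hW : {x : G | b⁻¹ * x ∈ N} ∈ nhds (1 : G) := by
      have : ContinuousAt (fun x : G => b⁻¹ * x) 1 :=
        (continuous_const.mul continuous_id).continuousAt
      exact this.preimage_mem_nhds (by simpa using hN)
    obtain ⟨p, hp2, hpW⟩ := aux_pow_near_one hpre (hpowS b hb) hW
    refine ⟨b ^ (p - 1), ?_, hpowS b hb (p - 1) (by omega)⟩
    have hbp : b⁻¹ * b ^ p = b ^ (p - 1) := by
      conv_lhs => rw [show p = 1 + (p - 1) by omega]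
      rw [pow_add, pow_one, inv_mul_cancel_left]
    rw [← hbp]
    exact hpW
  obtain ⟨a, ha⟩ := hne
  have h1 : (1 : G) ∈ S := by
    have := hclos (Set.mul_mem_mul (hinvclos a ha) ha)
    simpa using this
  have hinv : ∀ b ∈ S, b⁻¹ ∈ S := by
    intro b hb
    have := hclos (Set.mul_mem_mul (hinvclos b hb) h1)
    simpa using this
  have hclosed : IsClosed S := by
    refine isClosed_of_closure_subset fun x hx => ?_
    have := hclos (Set.mul_mem_mul hx h1)
    simpa using this
  let H : Subgroup G :=
    { carrier := S
      mul_mem' := fun ha hb => hmul (Set.mul_mem_mul ha hb)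
      one_mem' := h1
      inv_mem' := fun hb => hinv _ hb }
  exact ⟨hclosed, H, rfl⟩
end

section
/- Every open pseudocompact submonoid of a Hausdorff topological group G is a precompact closed subgroup of G. -/
open Pointwise

/-- A subset whose subspace topology is completely regular with all continuous
real functions bounded is left-precompact: `S ⊆ K * V` for some finite `K`. -/
lemma aux_precompact_left {G : Type*} [Group G] [TopologicalSpace G] [IsTopologicalGroup G]
    (S : Set G) (hcr : CompletelyRegularSpace S)
    (hb : ∀ f : ↥S → ℝ, Continuous f → ∃ M : ℝ, ∀ x, |f x| ≤ M)
    (V : Set G) (hV : V ∈ nhds (1 : G)) :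
    ∃ K : Finset G, S ⊆ (K : Set G) * V := by
  classical
  by_contra hbad
  push_neg at hbad
  -- a small symmetric neighborhood W of 1 with W*W*W*W ⊆ V
  obtain ⟨U1, hU1o, hU11, hU1⟩ := exists_open_nhds_one_mul_subset hV
  obtain ⟨U2, hU2o, hU21, hU2⟩ := exists_open_nhds_one_mul_subset (hU1o.mem_nhds hU11)
  set W : Set G := U2 ∩ U2⁻¹ with hWdef
  have hWo : IsOpen W := hU2o.inter hU2o.inv
  have hW1 : (1 : G) ∈ W := ⟨hU21, by simpa using hU21⟩
  have hWsym : ∀ w ∈ W, w⁻¹ ∈ W := fun w hw => ⟨hw.2, by simpa using hw.1⟩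
  have hW4 : ∀ a b c d : G, a ∈ W → b ∈ W → c ∈ W → d ∈ W → a * b * c * d ∈ V := by
    intro a b c d ha hb' hc hd
    have h1 : a * b ∈ U1 := hU2 (Set.mul_mem_mul ha.1 hb'.1)
    have h2 : c * d ∈ U1 := hU2 (Set.mul_mem_mul hc.1 hd.1)
    have := hU1 (Set.mul_mem_mul h1 h2)
    simpa [mul_assoc] using this
  -- pick points of S not covered by finitely many translates
  have hpick : ∀ K : Finset G, ∃ g, g ∈ S ∧ g ∉ (K : Set G) * V :=
    fun K => Set.not_subset.mp (hbad K)
  let pick : Finset G → G := fun K => (hpick K).choose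
  have hpickS : ∀ K : Finset G, pick K ∈ S := fun K => (hpick K).choose_spec.1
  have hpickV : ∀ K : Finset G, pick K ∉ (K : Set G) * V := fun K => (hpick K).choose_spec.2
  let F : ℕ → Finset G := fun n =>
    Nat.rec (motive := fun _ => Finset G) ∅ (fun _ K => insert (pick K) K) n
  let x : ℕ → G := fun n => pick (F n)
  have hF : ∀ n, F (n + 1) = insert (x n) (F n) := fun n => rfl
  have hxS : ∀ n, x n ∈ S := fun n => hpickS _
  have hxF : ∀ m n, m < n → x m ∈ F n := by
    intro m n h
    induction n with
    | zero => omega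
    | succ k ih =>
      rw [hF k]
      rcases Nat.lt_succ_iff_lt_or_eq.mp h with h' | h'
      · exact Finset.mem_insert_of_mem (ih h')
      · subst h'; exact Finset.mem_insert_self _ _
  have hsep : ∀ m n, m < n → ∀ v ∈ V, x n ≠ x m * v := by
    intro m n h v hv heq
    apply hpickV (F n)
    show x n ∈ (↑(F n) : Set G) * V
    rw [heq]
    exact Set.mul_mem_mul (by exact_mod_cast hxF m n h) hv
  -- translates x n • (W*W) are pairwise disjoint
  have hdisj : ∀ m n (y : G), m ≠ n → y ∈ x m • (W * W) → y ∈ x n • (W * W) → False := by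
    intro m n y hmn hym hyn
    obtain ⟨p, hp, hpy⟩ := hym
    obtain ⟨q, hq, hqy⟩ := hyn
    obtain ⟨a, ha, b, hb', hab⟩ := hp
    obtain ⟨c, hc, d, hd, hcd⟩ := hq
    have hab' : a * b = p := hab
    have hcd' : c * d = q := hcd
    have hpy' : x m * p = y := hpy
    have hqy' : x n * q = y := hqy
    have hyx : x m * (a * b) = x n * (c * d) := by
      rw [hab', hcd', hpy', hqy']
    rcases lt_or_gt_of_ne hmn with h | h
    · refine hsep m n h (a * b * d⁻¹ * c⁻¹) (hW4 a b d⁻¹ c⁻¹ ha hb' (hWsym d hd) (hWsym c hc)) ?_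
      have h2 : x n = x m * (a * b) * (c * d)⁻¹ := by rw [hyx]; group
      rw [h2]; group
    · refine hsep n m h (c * d * b⁻¹ * a⁻¹) (hW4 c d b⁻¹ a⁻¹ hc hd (hWsym b hb') (hWsym a ha)) ?_
      have h2 : x m = x n * (c * d) * (a * b)⁻¹ := by rw [← hyx]; group
      rw [h2]; group
  have hWWW : W ⊆ W * W := fun w hw => ⟨1, hW1, w, hw, one_mul w⟩
  have huniq : ∀ (y : G) m n, y ∈ x m • W → y ∈ x n • W → m = n := by
    intro y m n hm hn
    by_contra hne
    exact hdisj m n y hne (Set.smul_set_mono hWWW hm) (Set.smul_set_mono hWWW hn)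
  -- bump functions from complete regularity
  have hxmem : ∀ n, (x n : G) ∈ x n • W := fun n => ⟨1, hW1, by simp⟩
  have hbump : ∀ n : ℕ, ∃ g : ↥S → ℝ, Continuous g ∧ g ⟨x n, hxS n⟩ = 1 ∧
      ∀ y : ↥S, (y : G) ∉ x n • W → g y = 0 := by
    intro n
    have hKcl : IsClosed ((Subtype.val ⁻¹' (x n • W) : Set ↥S)ᶜ) :=
      (((hWo.smul (x n)).preimage continuous_subtype_val)).isClosed_compl
    have hxK : (⟨x n, hxS n⟩ : ↥S) ∉ ((Subtype.val ⁻¹' (x n • W) : Set ↥S)ᶜ) := by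
      simp only [Set.mem_compl_iff, Set.mem_preimage, not_not]
      exact hxmem n
    obtain ⟨f, hfc, hf0, hf1⟩ := hcr.completely_regular _ _ hKcl hxK
    refine ⟨fun y => 1 - (f y : ℝ),
      continuous_const.sub (continuous_subtype_val.comp hfc), by simp only [hf0]; norm_num, ?_⟩
    intro y hy
    have h1 : f y = 1 := hf1 (by simpa using hy)
    simp only [h1]
    norm_num
  choose gg hgc hg1 hg0 using hbump
  let f : ↥S → ℝ := fun y =>
    if h : ∃ n, (y : G) ∈ x n • W then (h.choose : ℝ) * gg h.choose y else 0
  have hfval : ∀ n (y : ↥S), (y : G) ∈ x n • W → f y = n * gg n y := by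
    intro n y hy
    have h : ∃ m, (y : G) ∈ x m • W := ⟨n, hy⟩
    have he : h.choose = n := huniq _ _ _ h.choose_spec hy
    simp only [f, dif_pos h, he]
  have hfval0 : ∀ y : ↥S, (¬∃ n, (y : G) ∈ x n • W) → f y = 0 := fun y h => dif_neg h
  -- f is continuous
  have hfc : Continuous f := by
    rw [continuous_iff_continuousAt]
    intro y
    have hUy : (Subtype.val ⁻¹' ((y : G) • W) : Set ↥S) ∈ nhds y :=
      ((hWo.smul (y : G)).preimage continuous_subtype_val).mem_nhds ⟨1, hW1, by simp⟩
    by_cases h1 : ∃ n, ∃ z ∈ (y : G) • W, z ∈ x n • W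
    · obtain ⟨n₀, z₀, hz₀y, hz₀n⟩ := h1
      have hyin : ∀ n (z : G), z ∈ (y : G) • W → z ∈ x n • W → (y : G) ∈ x n • (W * W) := by
        intro n z hzy hzn
        obtain ⟨w, hw, hwy⟩ := hzy
        obtain ⟨w', hw', hw'y⟩ := hzn
        have hwy' : (y : G) * w = z := hwy
        have hw'y' : x n * w' = z := hw'y
        refine ⟨w' * w⁻¹, ⟨w', hw', w⁻¹, hWsym w hw, rfl⟩, ?_⟩
        have : (y : G) * w = x n * w' := by rw [hwy', hw'y']
        calc x n • (w' * w⁻¹) = x n * w' * w⁻¹ := by rw [smul_eq_mul, mul_assoc]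
          _ = (y : G) := by rw [← this]; group
      have hyn₀ : (y : G) ∈ x n₀ • (W * W) := hyin n₀ z₀ hz₀y hz₀n
      have heq : Set.EqOn f (fun z => (n₀ : ℝ) * gg n₀ z)
          (Subtype.val ⁻¹' ((y : G) • W)) := by
        intro z hz
        by_cases h2 : ∃ n, (z : G) ∈ x n • W
        · obtain ⟨n, hn⟩ := h2
          have hnn : n = n₀ := by
            by_contra hne
            exact hdisj n n₀ (y : G) hne (hyin n z hz hn) hyn₀
          rw [hfval n z hn, hnn]
        · have hz0 : f z = 0 := hfval0 z h2
          have hg : gg n₀ z = 0 := hg0 n₀ z (fun hmem => h2 ⟨n₀, hmem⟩)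
          simp [hz0, hg]
      exact ContinuousAt.congr ((continuous_const.mul (hgc n₀)).continuousAt)
        (Filter.eventuallyEq_of_mem hUy heq).symm
    · have heq : Set.EqOn f (fun _ => (0 : ℝ)) (Subtype.val ⁻¹' ((y : G) • W)) := by
        intro z hz
        refine hfval0 z ?_
        rintro ⟨n, hn⟩
        exact h1 ⟨n, z, hz, hn⟩
      exact ContinuousAt.congr continuousAt_const (Filter.eventuallyEq_of_mem hUy heq).symm
  -- f is unbounded : contradiction
  obtain ⟨M, hM⟩ := hb f hfc
  set n := ⌈M⌉₊ + 1 with hn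
  have hfn : f ⟨x n, hxS n⟩ = n := by
    rw [hfval n _ (hxmem n), hg1 n, mul_one]
  have h1 : (n : ℝ) ≤ M := by
    have := hM ⟨x n, hxS n⟩
    rw [hfn] at this
    exact le_trans (le_abs_self _) this
  have h2 : M ≤ (⌈M⌉₊ : ℝ) := Nat.le_ceil M
  rw [hn] at h1
  push_cast at h1
  linarith

/-- Every open pseudocompact submonoid of a Hausdorff topological group is a
precompact closed subgroup. -/
theorem stmt7 {G : Type*} [Group G] [TopologicalSpace G] [IsTopologicalGroup G] [T2Space G]
    (S : Set G) (hopen : IsOpen S) (hone : (1 : G) ∈ S) (hmul : S * S ⊆ S)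
    (hpc : IsPseudocompact ↥S) :
    IsPrecompactIn S ∧ IsClosed S ∧ ∃ H : Subgroup G, (H : Set G) = S := by
  classical
  -- the group of units of S
  let Hs : Subgroup G :=
    { carrier := S ∩ S⁻¹
      one_mem' := ⟨hone, by simpa using hone⟩
      mul_mem' := by
        rintro a b ⟨ha1, ha2⟩ ⟨hb1, hb2⟩
        refine ⟨hmul (Set.mul_mem_mul ha1 hb1), ?_⟩
        rw [Set.mem_inv, mul_inv_rev]
        exact hmul (Set.mul_mem_mul (Set.mem_inv.mp hb2) (Set.mem_inv.mp ha2))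
      inv_mem' := by
        rintro a ⟨ha1, ha2⟩
        exact ⟨Set.mem_inv.mp ha2, by simpa using ha1⟩ }
  have hHo : IsOpen (S ∩ S⁻¹ : Set G) := hopen.inter hopen.inv
  have hH1 : (1 : G) ∈ S ∩ S⁻¹ := ⟨hone, by simpa using hone⟩
  -- finitely many cosets of Hs meet S
  have hfin : (Set.range (fun y : ↥S => (QuotientGroup.mk (y : G) : G ⧸ Hs))).Finite := by
    by_contra hinf
    have hinf' : (Set.range (fun y : ↥S => (QuotientGroup.mk (y : G) : G ⧸ Hs))).Infinite := hinf
    let e := Set.Infinite.natEmbedding _ hinf'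
    let ψ : G ⧸ Hs → ℝ := fun c => if h : ∃ n, ((e n : _) : G ⧸ Hs) = c then (h.choose : ℝ) else 0
    let f : ↥S → ℝ := fun y => ψ (QuotientGroup.mk (y : G))
    have hψ : ∀ n : ℕ, ψ ((e n : _)) = n := by
      intro n
      have h : ∃ m, ((e m : _) : G ⧸ Hs) = ((e n : _) : G ⧸ Hs) := ⟨n, rfl⟩
      have he : h.choose = n := e.injective (Subtype.val_injective h.choose_spec)
      simp only [ψ, dif_pos h, he]
    have hfc : Continuous f := by
      rw [continuous_iff_continuousAt]
      intro y
      have hUy : (Subtype.val ⁻¹' ((y : G) • (S ∩ S⁻¹)) : Set ↥S) ∈ nhds y :=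
        ((hHo.smul (y : G)).preimage continuous_subtype_val).mem_nhds ⟨1, hH1, by simp⟩
      have heq : Set.EqOn f (fun _ => f y) (Subtype.val ⁻¹' ((y : G) • (S ∩ S⁻¹))) := by
        intro z hz
        obtain ⟨h, hh, hhz⟩ := hz
        have hhz' : (y : G) * h = (z : G) := hhz
        have hq : (QuotientGroup.mk (z : G) : G ⧸ Hs) = QuotientGroup.mk (y : G) := by
          rw [QuotientGroup.eq]
          have : (z : G) = (y : G) * h := hhz'.symm
          have : (z : G)⁻¹ * (y : G) = h⁻¹ := by rw [this]; group
          rw [this]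
          exact Hs.inv_mem hh
        simp only [f]
        rw [hq]
      exact ContinuousAt.congr continuousAt_const (Filter.eventuallyEq_of_mem hUy heq).symm
    obtain ⟨M, hM⟩ := hpc.2.2 f hfc
    set n := ⌈M⌉₊ + 1 with hn
    obtain ⟨y, hy⟩ := (e n).2
    have hfy : f y = n := by
      simp only [f]
      rw [show (QuotientGroup.mk (y : G) : G ⧸ Hs) = ((e n : _) : G ⧸ Hs) from hy, hψ]
    have h1 : (n : ℝ) ≤ M := by
      have := hM y
      rw [hfy] at this
      exact le_trans (le_abs_self _) this
    have h2 : M ≤ (⌈M⌉₊ : ℝ) := Nat.le_ceil M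
    rw [hn] at h1
    push_cast at h1
    linarith
  -- S is closed under inverses
  have hinv : ∀ x ∈ S, x⁻¹ ∈ S := by
    intro x hx
    have hpow : ∀ n : ℕ, x ^ n ∈ S := by
      intro n
      induction n with
      | zero => simpa using hone
      | succ k ih => rw [pow_succ]; exact hmul (Set.mul_mem_mul ih hx)
    have key : ∀ a b : ℕ, a < b →
        (QuotientGroup.mk (x ^ a) : G ⧸ Hs) = QuotientGroup.mk (x ^ b) → x⁻¹ ∈ S := by
      intro a b hab hq
      rw [QuotientGroup.eq] at hq
      obtain ⟨j, hj⟩ : ∃ j, b = a + (j + 1) := ⟨b - a - 1, by omega⟩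
      subst hj
      have hxb : (x ^ a)⁻¹ * x ^ (a + (j + 1)) = x ^ (j + 1) := by
        rw [pow_add]; group
      rw [hxb] at hq
      have hq' : x ^ (j + 1) ∈ S ∩ S⁻¹ := hq
      have hxinvS : (x ^ (j + 1))⁻¹ ∈ S := Set.mem_inv.mp hq'.2
      have hxe : x⁻¹ = x ^ j * (x ^ (j + 1))⁻¹ := by rw [pow_succ]; group
      rw [hxe]
      exact hmul (Set.mul_mem_mul (hpow _) hxinvS)
    have hnotinj : ¬ Function.Injective (fun n : ℕ => (QuotientGroup.mk (x ^ n) : G ⧸ Hs)) := by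
      intro hinj
      exact (Set.infinite_of_injective_forall_mem hinj
        (fun n => Set.mem_range.mpr ⟨⟨x ^ n, hpow n⟩, rfl⟩)) hfin
    rw [Function.not_injective_iff] at hnotinj
    obtain ⟨a, b, hab, hne⟩ := hnotinj
    rcases hne.lt_or_gt with h | h
    · exact key a b h hab
    · exact key b a h hab.symm
  -- S is a subgroup
  let H' : Subgroup G :=
    { carrier := S
      one_mem' := hone
      mul_mem' := fun ha hb => hmul (Set.mul_mem_mul ha hb)
      inv_mem' := fun ha => hinv _ ha }
  have hclosed : IsClosed S := H'.isClosed_of_isOpen hopen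
  refine ⟨?_, hclosed, ⟨H', rfl⟩⟩
  intro V hV
  have hV' : V ∩ V⁻¹ ∈ nhds (1 : G) := Filter.inter_mem hV (inv_mem_nhds_one G hV)
  obtain ⟨K, hK⟩ := aux_precompact_left S hpc.1 hpc.2.2 _ hV'
  refine ⟨K ∪ K.image (·⁻¹), ?_, ?_⟩
  · refine hK.trans (Set.mul_subset_mul ?_ Set.inter_subset_left)
    intro k hk
    simp only [Finset.coe_union, Set.mem_union]
    exact Or.inl hk
  · intro s hs
    obtain ⟨k, hk, v, hv, hkv⟩ := hK (hinv s hs)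
    have hkv' : k * v = s⁻¹ := hkv
    refine ⟨v⁻¹, Set.mem_inv.mp hv.2, k⁻¹, ?_, ?_⟩
    · simp only [Finset.coe_union, Set.mem_union, Finset.mem_coe, Finset.mem_image]
      exact Or.inr ⟨k, by exact_mod_cast hk, rfl⟩
    · have h2 : (k * v)⁻¹ = s := by rw [hkv']; simp
      rw [← h2]; group
end

section
/- If G is a locally compact Hausdorff topological group and S is an open pseudocompact submonoid of G, then S is a compact subgroup of G. -/
open Pointwise Set Filter

private lemma iSup_eq_single {a : ℕ → ℝ} (n : ℕ) (h0 : ∀ m, m ≠ n → a m = 0)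
    (hn : 0 ≤ a n) : ⨆ m, a m = a n := by
  have hb : ∀ m, a m ≤ a n := by
    intro m
    by_cases h : m = n
    · subst h; exact le_rfl
    · rw [h0 m h]; exact hn
  exact le_antisymm (ciSup_le hb)
    (le_ciSup ⟨a n, by rintro _ ⟨m, rfl⟩; exact hb m⟩ n)

private lemma aux_bounded {G : Type*} [Group G] [TopologicalSpace G] [IsTopologicalGroup G]
    [T2Space G] [LocallyCompactSpace G] (S : Set G)
    (hbd : ∀ f : ↥S → ℝ, Continuous f → ∃ M : ℝ, ∀ x, |f x| ≤ M)
    (W : Set G) (hW : W ∈ nhds (1 : G)) : ∃ K : Finset G, S ⊆ (K : Set G) * W := by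
  classical
  by_contra h
  push_neg at h
  have h' : ∀ K : Finset G, ∃ x, x ∈ S ∧ x ∉ (K : Set G) * W := fun K =>
    Set.not_subset.mp (h K)
  choose F hFS hFW using h'
  -- a small symmetric neighborhood Q of 1 with Q*Q*Q*Q ⊆ W
  obtain ⟨V₁, hV₁o, hV₁1, hV₁⟩ := exists_open_nhds_one_mul_subset hW
  obtain ⟨V₂, hV₂o, hV₂1, hV₂⟩ := exists_open_nhds_one_mul_subset (hV₁o.mem_nhds hV₁1)
  set Q : Set G := V₂ ∩ V₂⁻¹ with hQdef
  have hQo : IsOpen Q := hV₂o.inter hV₂o.inv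
  have hQ1 : (1 : G) ∈ Q := ⟨hV₂1, by simpa using hV₂1⟩
  have hQsym : ∀ a ∈ Q, a⁻¹ ∈ Q := by
    rintro a ⟨h1, h2⟩
    exact ⟨by simpa using h2, by simpa using h1⟩
  have hQ4 : ∀ a ∈ Q, ∀ b ∈ Q, ∀ c ∈ Q, ∀ d ∈ Q, a * b * c * d ∈ W := by
    intro a ha b hb c hc d hd
    have h1 : a * b ∈ V₁ := hV₂ (Set.mul_mem_mul ha.1 hb.1)
    have h2 : c * d ∈ V₁ := hV₂ (Set.mul_mem_mul hc.1 hd.1)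
    have := hV₁ (Set.mul_mem_mul h1 h2)
    simpa [mul_assoc] using this
  -- the separated sequence
  set Kf : ℕ → Finset G := fun n => Nat.rec ∅ (fun _ K => insert (F K) K) n with hKf
  set x : ℕ → G := fun n => F (Kf n) with hx
  have hxS : ∀ n, x n ∈ S := fun n => hFS _
  have hKsucc : ∀ n, Kf (n + 1) = insert (x n) (Kf n) := fun n => rfl
  have hmem : ∀ n m, m < n → x m ∈ Kf n := by
    intro n
    induction n with
    | zero => intro m hm; omega
    | succ n ih =>
      intro m hm
      rw [hKsucc]
      rcases Nat.lt_succ_iff_lt_or_eq.mp hm with h | h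
      · exact Finset.mem_insert_of_mem (ih m h)
      · subst h; exact Finset.mem_insert_self _ _
  have hsep : ∀ m n, m < n → ∀ q ∈ W, x n ≠ x m * q := by
    intro m n hmn q hq heq
    apply hFW (Kf n)
    show x n ∈ (Kf n : Set G) * W
    rw [heq]
    exact Set.mul_mem_mul (Finset.mem_coe.mpr (hmem n m hmn)) hq
  -- disjointness of the translates x n • Q
  have hdisj : ∀ (y : G) (m n : ℕ), m ≠ n → (y • Q ∩ x m • Q).Nonempty →
      (y • Q ∩ x n • Q).Nonempty → False := by
    have key : ∀ (y : G) (m n : ℕ), m < n → (y • Q ∩ x m • Q).Nonempty →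
        (y • Q ∩ x n • Q).Nonempty → False := by
      rintro y m n hmn ⟨z₁, hz₁y, hz₁m⟩ ⟨z₂, hz₂y, hz₂n⟩
      obtain ⟨p, hp, hpz⟩ := hz₁y
      obtain ⟨q, hq, hqz⟩ := hz₁m
      obtain ⟨r, hr, hrz⟩ := hz₂y
      obtain ⟨t, ht, htz⟩ := hz₂n
      simp only [smul_eq_mul] at hpz hqz hrz htz
      have hy : y = x m * q * p⁻¹ := by
        rw [← hqz] at hpz; rw [← hpz]; group
      have hxn : x n = y * r * t⁻¹ := by
        rw [← htz] at hrz; rw [hrz]; group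
      refine hsep m n hmn (q * p⁻¹ * r * t⁻¹)
        (hQ4 q hq p⁻¹ (hQsym p hp) r hr t⁻¹ (hQsym t ht)) ?_
      rw [hxn, hy]; group
    intro y m n hmn h1 h2
    rcases hmn.lt_or_gt with h | h
    · exact key y m n h h1 h2
    · exact key y n m h h2 h1
  -- bump functions
  have hbump : ∀ n : ℕ, ∃ g : C(G, ℝ), Set.EqOn g 1 {x n} ∧ Set.EqOn g 0 (x n • Q)ᶜ ∧
      HasCompactSupport g ∧ ∀ z, g z ∈ Set.Icc (0 : ℝ) 1 := by
    intro n
    exact exists_continuous_one_zero_of_isCompact isCompact_singleton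
      (hQo.smul (x n)).isClosed_compl
      (Set.disjoint_left.mpr (by
        rintro a rfl
        simp only [Set.mem_compl_iff, not_not]
        exact ⟨1, hQ1, mul_one _⟩))
  choose g hg1 hg0 _ hg01 using hbump
  have hxmemQ : ∀ n, x n ∈ x n • Q := fun n => ⟨1, hQ1, mul_one _⟩
  have hgz : ∀ (z : G) (n : ℕ), z ∉ x n • Q → g n z = 0 := fun z n hz => hg0 n hz
  have hnn : ∀ (n : ℕ) (z : G), 0 ≤ (n : ℝ) * g n z :=
    fun n z => mul_nonneg (Nat.cast_nonneg n) (hg01 n z).1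
  set f : G → ℝ := fun z => ⨆ n : ℕ, (n : ℝ) * g n z with hf
  have hfval : ∀ (n : ℕ) (z : G), z ∈ x n • Q → f z = (n : ℝ) * g n z := by
    intro n z hz
    refine iSup_eq_single (a := fun m : ℕ => (m : ℝ) * g m z) n (fun m hm => ?_) (hnn n z)
    have : z ∉ x m • Q := by
      intro hzm
      exact hdisj z m n hm ⟨z, ⟨1, hQ1, mul_one z⟩, hzm⟩ ⟨z, ⟨1, hQ1, mul_one z⟩, hz⟩
    show (m : ℝ) * g m z = 0
    rw [hgz z m this, mul_zero]
  have hfx : ∀ n : ℕ, f (x n) = n := by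
    intro n
    rw [hfval n (x n) (hxmemQ n), hg1 n rfl, Pi.one_apply, mul_one]
  have hfc : Continuous f := by
    rw [continuous_iff_continuousAt]
    intro y
    have hyQ : y • Q ∈ nhds y := (hQo.smul y).mem_nhds ⟨1, hQ1, mul_one y⟩
    by_cases hy : ∃ n : ℕ, (y • Q ∩ x n • Q).Nonempty
    · obtain ⟨n, hn⟩ := hy
      have heq : ∀ z ∈ y • Q, f z = (n : ℝ) * g n z := by
        intro z hz
        refine iSup_eq_single (a := fun m : ℕ => (m : ℝ) * g m z) n (fun m hm => ?_) (hnn n z)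
        have : z ∉ x m • Q := fun hzm => hdisj y m n hm ⟨z, hz, hzm⟩ hn
        show (m : ℝ) * g m z = 0
        rw [hgz z m this, mul_zero]
      exact ((continuous_const.mul (g n).continuous).continuousAt).congr
        (Filter.eventuallyEq_of_mem hyQ fun z hz => (heq z hz).symm)
    · have heq : ∀ z ∈ y • Q, f z = 0 := by
        intro z hz
        have h0 : ∀ m : ℕ, (m : ℝ) * g m z = 0 := by
          intro m
          have : z ∉ x m • Q := fun hzm => hy ⟨m, z, hz, hzm⟩
          rw [hgz z m this, mul_zero]
        have h1 := iSup_eq_single (a := fun m : ℕ => (m : ℝ) * g m z) 0 (fun m _ => h0 m)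
          (h0 0).ge
        have h2 : f z = ((0 : ℕ) : ℝ) * g 0 z := h1
        rw [h2, h0 0]
      exact continuousAt_const.congr
        (Filter.eventuallyEq_of_mem hyQ fun z hz => (heq z hz).symm)
  obtain ⟨M, hM⟩ := hbd (fun p => f p.1) (hfc.comp continuous_subtype_val)
  set n : ℕ := ⌈M⌉₊ + 1 with hn
  have h1 := hM ⟨x n, hxS n⟩
  simp only [hfx n] at h1
  rw [abs_of_nonneg (Nat.cast_nonneg n)] at h1
  have h2 : M ≤ (⌈M⌉₊ : ℝ) := Nat.le_ceil M
  have h3 : ((⌈M⌉₊ + 1 : ℕ) : ℝ) = (⌈M⌉₊ : ℝ) + 1 := by push_cast; ring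
  rw [hn, h3] at h1
  linarith

/-- An open pseudocompact submonoid of a locally compact Hausdorff group is a compact subgroup. -/
theorem stmt8 {G : Type*} [Group G] [TopologicalSpace G] [IsTopologicalGroup G] [T2Space G]
    [LocallyCompactSpace G]
    (S : Set G) (hopen : IsOpen S) (hone : (1 : G) ∈ S) (hmul : S * S ⊆ S)
    (hpc : IsPseudocompact ↥S) :
    IsCompact S ∧ ∃ H : Subgroup G, (H : Set G) = S := by

  obtain ⟨-, -, hbd⟩ := hpc
  obtain ⟨V₀, hV₀c, hV₀mem⟩ := exists_compact_mem_nhds (1 : G)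
  obtain ⟨K, hK⟩ := aux_bounded S hbd V₀ hV₀mem
  have hC : IsCompact ((K : Set G) * V₀) := K.finite_toSet.isCompact.mul hV₀c
  -- S is closed
  have hT : IsOpen (S ∩ S⁻¹) := hopen.inter hopen.inv
  have h1T : (1 : G) ∈ S ∩ S⁻¹ := ⟨hone, by simpa using hone⟩
  have hSclosed : IsClosed S := by
    refine isClosed_of_closure_subset fun x hx => ?_
    have hnx : x • (S ∩ S⁻¹) ∈ nhds x := (hT.smul x).mem_nhds ⟨1, h1T, mul_one x⟩
    obtain ⟨z, hzx, hzS⟩ := mem_closure_iff_nhds.mp hx _ hnx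
    obtain ⟨t, htT, htz⟩ := hzx
    simp only [smul_eq_mul] at htz
    have hxeq : x = z * t⁻¹ := by rw [← htz]; group
    rw [hxeq]
    exact hmul (Set.mul_mem_mul hzS htT.2)
  have hScomp : IsCompact S := hC.of_isClosed_subset hSclosed hK
  -- powers stay in S
  have hpow : ∀ s ∈ S, ∀ n : ℕ, s ^ n ∈ S := by
    intro s hs n
    induction n with
    | zero => simpa using hone
    | succ n ih => rw [pow_succ]; exact hmul (Set.mul_mem_mul ih hs)
  -- inverses
  have hinv : ∀ s ∈ S, s⁻¹ ∈ S := by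
    intro s hs
    have hle : Filter.map (fun n : ℕ => s ^ n) Filter.atTop ≤ Filter.principal S :=
      Filter.le_principal_iff.mpr
        (Filter.mem_map.mpr (Filter.Eventually.of_forall fun n => hpow s hs n))
    obtain ⟨x, -, hx⟩ := hScomp.exists_clusterPt hle
    have hxcl : MapClusterPt x Filter.atTop (fun n : ℕ => s ^ n) := hx
    rw [← hSclosed.closure_eq, mem_closure_iff]
    intro W hWo hWs
    -- conjugated neighborhood of 1
    have hsWo : IsOpen (s • W) := hWo.smul s
    have h1sW : (1 : G) ∈ s • W := ⟨s⁻¹, hWs, by simp⟩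
    set U : Set G := (fun gg => x * gg * x⁻¹) ⁻¹' (s • W) with hU
    have hUo : IsOpen U := hsWo.preimage (by continuity)
    have h1U : (1 : G) ∈ U := by
      simp only [hU, Set.mem_preimage, mul_one]
      simpa using h1sW
    obtain ⟨V, hV, hVsplit⟩ := exists_nhds_split_inv (hUo.mem_nhds h1U)
    have hxV : x • V ∈ nhds x := by
      have := smul_mem_nhds_smul x hV
      simpa using this
    have hfreq := (mapClusterPt_iff_frequently.mp hxcl) _ hxV
    obtain ⟨m, hm1, hmV⟩ := (Filter.frequently_atTop.mp hfreq) 1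
    obtain ⟨n, hn1, hnV⟩ := (Filter.frequently_atTop.mp hfreq) (m + 1)
    obtain ⟨a, ha, hax⟩ := hmV
    obtain ⟨b, hb, hbx⟩ := hnV
    simp only [smul_eq_mul] at hax hbx
    have hba : b / a ∈ U := hVsplit b hb a ha
    have hmem : x * (b / a) * x⁻¹ ∈ s • W := hba
    have hpoweq : x * (b / a) * x⁻¹ = s ^ (n - m) := by
      have h3 : s ^ (n - m) * s ^ m = s ^ n := by
        rw [← pow_add, Nat.sub_add_cancel (by omega)]
      have h4 : s ^ (n - m) = s ^ n * (s ^ m)⁻¹ := by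
        rw [← h3]; group
      rw [h4, ← hax, ← hbx, div_eq_mul_inv, mul_inv_rev]
      group
    rw [hpoweq] at hmem
    obtain ⟨w, hw, hws⟩ := hmem
    simp only [smul_eq_mul] at hws
    refine ⟨s ^ (n - m - 1), ?_, hpow s hs _⟩
    have h5 : s * s ^ (n - m - 1) = s ^ (n - m) := by
      rw [← pow_succ']
      congr 1
      omega
    have : w = s ^ (n - m - 1) := by
      have : s * w = s * s ^ (n - m - 1) := by rw [hws, h5]
      exact mul_left_cancel this
    rwa [← this]
  refine ⟨hScomp, ⟨{ carrier := S, mul_mem' := ?_, one_mem' := hone, inv_mem' := ?_ }, rfl⟩⟩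
  · exact fun ha hb => hmul (Set.mul_mem_mul ha hb)
  · exact fun ha => hinv _ ha
end

section
/- If B is a precompact subset of a Hausdorff topological group G, then for every neighborhood U of the identity e in G there exists a neighborhood V of e such that b·V·b⁻¹ ⊆ U for each b ∈ B. -/
open Pointwise

/-- If B is precompact then for every neighborhood U of 1 there is a neighborhood V
with b*V*b⁻¹ ⊆ U for each b ∈ B. -/
theorem stmt9 {G : Type*} [Group G] [TopologicalSpace G] [IsTopologicalGroup G] [T2Space G]
    (B : Set G) (hB : IsPrecompactIn B) :
    ∀ U ∈ nhds (1 : G), ∃ V ∈ nhds (1 : G), ∀ b ∈ B, ∀ v ∈ V, b * v * b⁻¹ ∈ U := by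
  intro U hU
  -- get V₂ with pairwise products in U, V₃ with pairwise products in V₂
  obtain ⟨V₂, hV₂, hV₂mul⟩ := exists_nhds_one_split hU
  obtain ⟨V₃, hV₃, hV₃mul⟩ := exists_nhds_one_split hV₂
  -- symmetric W with triple products in U
  set W : Set G := (V₂ ∩ V₃) ∩ (V₂ ∩ V₃)⁻¹ with hWdef
  have hW : W ∈ nhds (1 : G) := by
    refine Filter.inter_mem (Filter.inter_mem hV₂ hV₃) ?_
    exact inv_mem_nhds_one G (Filter.inter_mem hV₂ hV₃)
  have hWsymm : ∀ w ∈ W, w⁻¹ ∈ W := by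
    intro w hw
    rcases hw with ⟨hw1, hw2⟩
    exact ⟨by simpa using hw2, by simpa using hw1⟩
  have hWtriple : ∀ a ∈ W, ∀ b ∈ W, ∀ c ∈ W, a * b * c ∈ U := by
    intro a ha b hb c hc
    have hab : a * b ∈ V₂ := hV₃mul a ha.1.2 b hb.1.2
    exact hV₂mul (a * b) hab c hc.1.1
  -- precompactness: B ⊆ W * K
  obtain ⟨K, -, hBWK⟩ := hB W hW
  -- V : conjugates by elements of K land in W
  set V : Set G := ⋂ k ∈ K, (fun v => k * v * k⁻¹) ⁻¹' W with hVdef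
  have hV : V ∈ nhds (1 : G) := by
    refine (Filter.biInter_finset_mem K).mpr ?_
    intro k _
    have hc : Continuous (fun v : G => k * v * k⁻¹) := by continuity
    have : (fun v : G => k * v * k⁻¹) 1 = 1 := by simp
    exact hc.continuousAt.preimage_mem_nhds (by simpa [this] using hW)
  refine ⟨V, hV, ?_⟩
  intro b hb v hv
  obtain ⟨w, hw, k, hk, hbk⟩ := hBWK hb
  have hkK : k ∈ K := by exact_mod_cast hk
  have hconj : k * v * k⁻¹ ∈ W := by
    have := Set.mem_iInter₂.mp hv k hkK
    exact this
  have hwinv : w⁻¹ ∈ W := hWsymm w hw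
  have : b * v * b⁻¹ = w * (k * v * k⁻¹) * w⁻¹ := by
    rw [← hbk]; group
  rw [this]
  exact hWtriple w hw (k * v * k⁻¹) hconj w⁻¹ hwinv
end

section
/- Let S be an open precompact subsemigroup of a Hausdorff topological group G, let H denote the closure of S (a subgroup), and let K = S ∩ S⁻¹. Then the intersection N = ⋂_{s ∈ H} s K s⁻¹ is an open normal subgroup of H. -/
open Pointwise

section Aux
variable {G : Type*} [Group G] [TopologicalSpace G] [IsTopologicalGroup G]

lemma aux_pow_mem {S : Set G} (hmul : S * S ⊆ S) {s : G} (hs : s ∈ S) :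
    ∀ n : ℕ, s ^ (n + 1) ∈ S := by
  intro n
  induction n with
  | zero => simpa using hs
  | succ n ih => rw [pow_succ]; exact hmul (Set.mul_mem_mul ih hs)

lemma aux_small_pow {S : Set G} (hmul : S * S ⊆ S)
    (hpre : IsPrecompactIn S) {s : G} (hs : s ∈ S) {V : Set G} (hV : V ∈ nhds 1) :
    ∃ j : ℕ, 2 ≤ j ∧ s ^ j ∈ V := by
  obtain ⟨U, hUo, hU1, hUU⟩ := exists_open_nhds_one_mul_subset hV
  set W : Set G := U ∩ U⁻¹ with hW
  have hWn : W ∈ nhds (1 : G) :=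
    (hUo.inter hUo.inv).mem_nhds ⟨hU1, by simpa using hU1⟩
  have hWV : W⁻¹ * W ⊆ V := by
    intro x hx
    obtain ⟨a, ha, b, hb, rfl⟩ := hx
    exact hUU (Set.mul_mem_mul (by simpa using ha.2) hb.1)
  obtain ⟨F, hF, -⟩ := hpre W hWn
  have hP : ∀ n : ℕ, ∃ k ∈ (F : Set G), ∃ w ∈ W, k * w = (s ^ 2) ^ (n + 1) := by
    intro n
    have : (s ^ 2) ^ (n + 1) ∈ S := by
      rw [← pow_mul]
      have : 2 * (n + 1) = (2 * (n + 1) - 1) + 1 := by omega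
      rw [this]; exact aux_pow_mem hmul hs _
    exact Set.mem_mul.1 (hF this)
  choose k hkF w hwW hkw using hP
  have hcard : (Finset.range (F.card + 1)).card > F.card := by simp
  obtain ⟨a, -, b, -, hab, hfab⟩ :=
    Finset.exists_ne_map_eq_of_card_lt_of_maps_to hcard (fun n _ => hkF n)
  wlog hlt : a < b generalizing a b
  · exact this b a hab.symm hfab.symm (by omega)
  refine ⟨2 * (b - a), by omega, ?_⟩
  have key : (s ^ 2) ^ (b - a) = (w a)⁻¹ * (w b) := by
    have hb : (s ^ 2) ^ (b + 1) = (s ^ 2) ^ (a + 1) * (s ^ 2) ^ (b - a) := by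
      rw [← pow_add]; congr 1; omega
    have e1 := hkw a
    have e2 := hkw b
    rw [← e1, ← e2, hfab] at hb
    have h3 : w b = w a * (s ^ 2) ^ (b - a) :=
      mul_left_cancel (a := k b) (by rw [hb, mul_assoc])
    rw [h3, inv_mul_cancel_left]
  rw [pow_mul, key]
  exact hWV (Set.mul_mem_mul (Set.inv_mem_inv.2 (hwW a)) (hwW b))

lemma aux_inv_mem_closure {S : Set G} (hmul : S * S ⊆ S)
    (hpre : IsPrecompactIn S) {s : G} (hs : s ∈ S) : s⁻¹ ∈ closure S := by
  rw [mem_closure_iff_nhds]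
  intro U hU
  have hpre1 : (fun x => s⁻¹ * x) ⁻¹' U ∈ nhds (1 : G) := by
    have hc : ContinuousAt (fun x => s⁻¹ * x) (1 : G) :=
      (continuous_mul_left s⁻¹).continuousAt
    exact hc.preimage_mem_nhds (by simpa using hU)
  obtain ⟨j, hj2, hjV⟩ := aux_small_pow hmul hpre hs hpre1
  refine ⟨s ^ (j - 1), ?_, ?_⟩
  · have : s⁻¹ * s ^ j = s ^ (j - 1) := by
      have : s ^ j = s * s ^ (j - 1) := by
        conv_lhs => rw [show j = (j - 1) + 1 by omega]
        rw [pow_succ']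
      rw [this]; group
    simpa [this] using hjV
  · have : j - 1 = (j - 2) + 1 := by omega
    rw [this]; exact aux_pow_mem hmul hs _

lemma aux_one_mem {S : Set G} (hopen : IsOpen S) (hne : S.Nonempty)
    (hmul : S * S ⊆ S) (hpre : IsPrecompactIn S) : (1 : G) ∈ S := by
  obtain ⟨s, hs⟩ := hne
  have h1 : s ∈ closure (S⁻¹) := by
    rw [← inv_closure]
    exact Set.mem_inv.2 (aux_inv_mem_closure hmul hpre hs)
  obtain ⟨t, htS, htSi⟩ := mem_closure_iff.1 h1 S hopen hs
  have : t * t⁻¹ ∈ S := hmul (Set.mul_mem_mul htS htSi)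
  simpa using this

end Aux

/-- For an open precompact subsemigroup S with H = closure S and K = S ∩ S⁻¹,
the set N = ⋂_{s ∈ H} s K s⁻¹ is an open normal subgroup of H. -/
theorem stmt10 {G : Type*} [Group G] [TopologicalSpace G] [IsTopologicalGroup G] [T2Space G]
    (S : Set G) (hopen : IsOpen S) (hne : S.Nonempty) (hmul : S * S ⊆ S)
    (hpre : IsPrecompactIn S) :
    let K : Set G := S ∩ S⁻¹
    let N : Set G := ⋂ s ∈ closure S, (fun k => s * k * s⁻¹) '' K
    N ⊆ closure S ∧ (∃ U : Set G, IsOpen U ∧ N = U ∩ closure S) ∧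
      (1 : G) ∈ N ∧ N * N ⊆ N ∧ N⁻¹ ⊆ N ∧
      ∀ g ∈ closure S, ∀ n ∈ N, g * n * g⁻¹ ∈ N := by
  intro K N
  -- basic facts about K
  have hone : (1 : G) ∈ S := aux_one_mem hopen hne hmul hpre
  have hK1 : (1 : G) ∈ K := ⟨hone, by simpa using hone⟩
  have hKS : K ⊆ S := Set.inter_subset_left
  have hKmul : ∀ a ∈ K, ∀ b ∈ K, a * b ∈ K := by
    rintro a ⟨ha, ha'⟩ b ⟨hb, hb'⟩
    refine ⟨hmul (Set.mul_mem_mul ha hb), ?_⟩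
    rw [Set.mem_inv, mul_inv_rev]
    exact hmul (Set.mul_mem_mul hb' ha')
  have hKinv : ∀ a ∈ K, a⁻¹ ∈ K := by
    rintro a ⟨ha, ha'⟩
    exact ⟨ha', by simpa using ha⟩
  have hKopen : IsOpen K := hopen.inter hopen.inv
  have hKconj : ∀ a ∈ K, ∀ b ∈ K, a * b * a⁻¹ ∈ K := fun a ha b hb =>
    hKmul _ (hKmul a ha b hb) _ (hKinv a ha)
  -- closure S is a subgroup
  have hHmul : ∀ a ∈ closure S, ∀ b ∈ closure S, a * b ∈ closure S := by
    intro a ha b hb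
    exact map_mem_closure₂ continuous_mul ha hb fun x hx y hy => hmul (Set.mul_mem_mul hx hy)
  have hHinv : ∀ a ∈ closure S, a⁻¹ ∈ closure S := by
    intro a ha
    have h1 : closure (S⁻¹) ⊆ closure S := by
      apply closure_minimal _ isClosed_closure
      intro t ht
      have := aux_inv_mem_closure hmul hpre (Set.mem_inv.1 ht)
      simpa using this
    apply h1
    rw [← inv_closure]
    exact Set.inv_mem_inv.2 ha
  have h1H : (1 : G) ∈ closure S := subset_closure hone
  -- membership criterion for N
  have hNmem : ∀ x : G, x ∈ N ↔ ∀ s ∈ closure S, ∃ k ∈ K, s * k * s⁻¹ = x := by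
    intro x
    simp only [N, Set.mem_iInter, Set.mem_image]
  have hNsub : N ⊆ closure S := by
    intro n hn
    obtain ⟨k, hk, hkn⟩ := (hNmem n).1 hn 1 h1H
    have : n = k := by rw [← hkn]; group
    exact this ▸ subset_closure (hKS hk)
  refine ⟨hNsub, ?_, ?_, ?_, ?_, ?_⟩
  · -- openness
    obtain ⟨V, hVopen, hV1, hVVK⟩ := exists_open_nhds_one_mul_subset (hKopen.mem_nhds hK1)
    obtain ⟨F, hF, -⟩ := hpre V (hVopen.mem_nhds hV1)
    have hclV : closure V ⊆ K := by
      intro x hx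
      have hxVi : IsOpen ((x * ·) '' V⁻¹) := isOpenMap_mul_left x _ hVopen.inv
      have hx1 : x ∈ (x * ·) '' V⁻¹ := ⟨1, by simpa using hV1, mul_one x⟩
      obtain ⟨y, ⟨v, hv, hvy⟩, hyV⟩ := mem_closure_iff.1 hx ((x * ·) '' V⁻¹) hxVi hx1
      have : x = y * v⁻¹ := by rw [← hvy]; group
      rw [this]
      exact hVVK (Set.mul_mem_mul hyV (by simpa using hv))
    have hHFK : closure S ⊆ (F : Set G) * K := by
      intro x hx
      have h1 : closure S ⊆ closure ((F : Set G) * V) := closure_mono hF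
      have h2 : ((F : Set G) * V) = ⋃ f ∈ (F : Set G), f • V := by
        ext z; simp [Set.mem_mul, Set.mem_smul_set]
      have h3 : closure ((F : Set G) * V) ⊆ (F : Set G) * closure V := by
        rw [h2, (F.finite_toSet.closure_biUnion _)]
        intro z hz
        simp only [Set.mem_iUnion] at hz
        obtain ⟨f, hf, hz⟩ := hz
        rw [closure_smul] at hz
        obtain ⟨v, hv, rfl⟩ := hz
        exact Set.mul_mem_mul hf hv
      have := h3 (h1 hx)
      obtain ⟨f, hf, v, hv, rfl⟩ := this
      exact Set.mul_mem_mul hf (hclV hv)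
    classical
    set T : Set G := {f ∈ (F : Set G) | ∃ k ∈ K, f * k ∈ closure S} with hT
    have hTfin : T.Finite := F.finite_toSet.subset fun f hf => hf.1
    refine ⟨⋂ f ∈ T, (fun k => f * k * f⁻¹) '' K, ?_, ?_⟩
    · apply hTfin.isOpen_biInter
      intro f _
      have himg : (fun k => f * k * f⁻¹) '' K = (· * f⁻¹) '' ((f * ·) '' K) := by
        rw [Set.image_image]
      rw [himg]
      exact isOpenMap_mul_right f⁻¹ _ (isOpenMap_mul_left f _ hKopen)
    · have hNU : N ⊆ ⋂ f ∈ T, (fun k => f * k * f⁻¹) '' K := by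
        intro n hn
        simp only [Set.mem_iInter]
        rintro f ⟨hfF, k, hk, hfk⟩
        obtain ⟨x, hx, hxn⟩ := (hNmem n).1 hn (f * k) hfk
        refine ⟨k * x * k⁻¹, hKconj k hk x hx, ?_⟩
        rw [← hxn]; group
      have hUN : (⋂ f ∈ T, (fun k => f * k * f⁻¹) '' K) ⊆ N := by
        intro x hx
        rw [hNmem]
        intro s hs
        obtain ⟨f, hfF, k, hk, rfl⟩ := hHFK hs
        have hfT : f ∈ T := ⟨hfF, k, hk, hs⟩
        simp only [Set.mem_iInter] at hx
        obtain ⟨y, hy, hyx⟩ := hx f hfT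
        refine ⟨k⁻¹ * y * k, hKmul _ (hKmul _ (hKinv k hk) y hy) k hk, ?_⟩
        rw [← hyx]; group
      refine Set.Subset.antisymm (Set.subset_inter hNU hNsub) ?_
      exact fun x hx => hUN hx.1
  · rw [hNmem]
    intro s hs
    exact ⟨1, hK1, by group⟩
  · rintro x ⟨n, hn, m, hm, rfl⟩
    rw [hNmem]
    intro s hs
    obtain ⟨k, hk, hkn⟩ := (hNmem n).1 hn s hs
    obtain ⟨k', hk', hkm⟩ := (hNmem m).1 hm s hs
    refine ⟨k * k', hKmul k hk k' hk', ?_⟩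
    rw [← hkn, ← hkm]; group
  · intro x hx
    rw [hNmem]
    intro s hs
    obtain ⟨k, hk, hkx⟩ := (hNmem x⁻¹).1 (Set.mem_inv.1 hx) s hs
    refine ⟨k⁻¹, hKinv k hk, ?_⟩
    have : x = (s * k * s⁻¹)⁻¹ := by rw [hkx]; simp
    rw [this]; group
  · intro g hg n hn
    rw [hNmem]
    intro s hs
    have : g⁻¹ * s ∈ closure S := hHmul _ (hHinv g hg) s hs
    obtain ⟨k, hk, hkn⟩ := (hNmem n).1 hn (g⁻¹ * s) this
    refine ⟨k, hk, ?_⟩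
    rw [← hkn]; group
end

section
/- Every precompact subsemigroup of a Hausdorff topological group has countable cellularity (the Souslin property): every pairwise disjoint family of nonempty open subsets of S is countable. -/
open Pointwise

section AuxiliaryLemmas

open Filter Topology Set UniformSpace Uniformity

theorem conj_control' {G : Type*} [Group G] [TopologicalSpace G] [IsTopologicalGroup G]
    {S : Set G} (hpre : ∀ V ∈ nhds (1 : G), ∃ K : Finset G, S ⊆ (K : Set G) * V ∧ S ⊆ V * (K : Set G))
    {V : Set G} (hV : V ∈ 𝓝 (1:G)) :
    ∃ W ∈ 𝓝 (1:G), (∀ s ∈ S, ∀ w ∈ W, s * w * s⁻¹ ∈ V) ∧ (∀ s ∈ S, ∀ w ∈ W, s⁻¹ * w * s ∈ V) := by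
  obtain ⟨V₁, hV₁, hV₁m⟩ := exists_nhds_one_split hV
  obtain ⟨V₂, hV₂, hV₂m⟩ := exists_nhds_one_split hV₁
  set U₀ : Set G := V₁ ∩ V₂ with hU₀
  have hU₀n : U₀ ∈ 𝓝 (1:G) := Filter.inter_mem hV₁ hV₂
  set U : Set G := U₀ ∩ U₀⁻¹ with hU
  have hUn : U ∈ 𝓝 (1:G) := Filter.inter_mem hU₀n (inv_mem_nhds_one G hU₀n)
  have hUinv : ∀ u ∈ U, u⁻¹ ∈ U := by
    rintro u ⟨h1, h2⟩
    exact ⟨by simpa using h2, by simpa using h1⟩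
  have htriple : ∀ a ∈ U, ∀ b ∈ U, ∀ c ∈ U, a * b * c ∈ V := by
    rintro a ⟨⟨_, ha⟩, _⟩ b ⟨⟨_, hb⟩, _⟩ c ⟨⟨hc, _⟩, _⟩
    exact hV₁m _ (hV₂m _ ha _ hb) _ hc
  obtain ⟨K, hK1, hK2⟩ := hpre U hUn
  have hconjmem : ∀ k : G, ∀ x : G, ((fun g => x * g * x⁻¹) ⁻¹' U) ∈ 𝓝 (1:G) → True := fun _ _ _ => trivial
  have hpre_mem : ∀ x : G, ((fun g => x * g * x⁻¹) ⁻¹' U) ∈ 𝓝 (1:G) := by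
    intro x
    have hc : Continuous fun g : G => x * g * x⁻¹ :=
      (continuous_const.mul continuous_id).mul continuous_const
    have ht : Filter.Tendsto (fun g : G => x * g * x⁻¹) (𝓝 1) (𝓝 1) := by
      simpa using hc.tendsto (1 : G)
    exact ht hUn
  set W : Set G := U ∩ (⋂ k ∈ K, (fun g => k * g * k⁻¹) ⁻¹' U) ∩ (⋂ k ∈ K, (fun g => k⁻¹ * g * k) ⁻¹' U)
    with hW
  have hWn : W ∈ 𝓝 (1:G) := by
    refine Filter.inter_mem (Filter.inter_mem hUn ?_) ?_
    · exact (Filter.biInter_finset_mem K).2 fun k _ => hpre_mem k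
    · exact (Filter.biInter_finset_mem K).2 fun k _ => by simpa using hpre_mem k⁻¹
  refine ⟨W, hWn, ?_, ?_⟩
  · rintro s hs w ⟨⟨hwU, hw2⟩, _⟩
    obtain ⟨u, hu, k, hk, rfl⟩ := hK2 hs
    have hkw : k * w * k⁻¹ ∈ U := by
      have := Set.mem_iInter₂.1 hw2 k hk
      exact this
    have : u * (k * w * k⁻¹) * u⁻¹ ∈ V := htriple _ hu _ hkw _ (hUinv _ hu)
    convert this using 1
    group
  · rintro s hs w ⟨⟨hwU, _⟩, hw3⟩
    obtain ⟨k, hk, u, hu, rfl⟩ := hK1 hs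
    have hkw : k⁻¹ * w * k ∈ U := Set.mem_iInter₂.1 hw3 k hk
    have : u⁻¹ * (k⁻¹ * w * k) * u ∈ V := htriple _ (hUinv _ hu) _ hkw _ hu
    convert this using 1
    group

end AuxiliaryLemmas

open Filter Topology Set UniformSpace Uniformity in
/-- Every precompact subsemigroup of a Hausdorff topological group has countable cellularity. -/
theorem stmt12 {G : Type*} [Group G] [TopologicalSpace G] [IsTopologicalGroup G] [T2Space G]
    (S : Set G) (hne : S.Nonempty) (hmul : S * S ⊆ S) (hpre : IsPrecompactIn S)
    (F : Set (Set ↥S)) (hF : ∀ U ∈ F, IsOpen U ∧ U.Nonempty)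
    (hdisj : F.Pairwise Disjoint) :
    F.Countable := by
  classical
  haveI hneS : Nonempty ↥S := hne.to_subtype
  letI uS : UniformSpace ↥S :=
    ((IsTopologicalGroup.rightUniformSpace G).comap (Subtype.val)).replaceTopology rfl
  have hUS : 𝓤 ↥S = Filter.comap (fun p : ↥S × ↥S => (p.2 : G) / (p.1 : G)) (𝓝 (1:G)) := by
    show Filter.comap (Prod.map Subtype.val Subtype.val)
      (Filter.comap (fun p : G × G => p.2 * p.1⁻¹) (𝓝 (1:G))) = _
    rw [Filter.comap_comap]
    congr 1; funext p; exact (div_eq_mul_inv _ _).symm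
  -- basic entourages
  have hEV_mem : ∀ V ∈ 𝓝 (1:G), {p : ↥S × ↥S | (p.2 : G) / (p.1 : G) ∈ V} ∈ 𝓤 ↥S := by
    intro V hV
    rw [hUS]
    exact Filter.preimage_mem_comap hV
  have hEV_basis : ∀ d ∈ 𝓤 ↥S, ∃ V ∈ 𝓝 (1:G),
      {p : ↥S × ↥S | (p.2 : G) / (p.1 : G) ∈ V} ⊆ d := by
    intro d hd
    rw [hUS] at hd
    exact Filter.mem_comap.1 hd
  -- totally bounded
  have htb : TotallyBounded (Set.univ : Set ↥S) := by
    intro d hd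
    obtain ⟨V, hV, hVd⟩ := hEV_basis d hd
    obtain ⟨V₁, hV₁, hV₁m⟩ := exists_nhds_one_split hV
    set W : Set G := V₁ ∩ V₁⁻¹ with hWdef
    have hWn : W ∈ 𝓝 (1:G) := Filter.inter_mem hV₁ (inv_mem_nhds_one G hV₁)
    obtain ⟨K, _, hK2⟩ := hpre W hWn
    set C : G → ↥S := fun k =>
      if h : ∃ s : ↥S, (s : G) ∈ W * ({k} : Set G) then h.choose else Classical.arbitrary ↥S
      with hC
    refine ⟨C '' ↑K, (K.finite_toSet.image C), ?_⟩
    rintro x -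
    obtain ⟨w, hw, k, hk, hwk⟩ := hK2 x.2
    have hx : ∃ s : ↥S, (s : G) ∈ W * ({k} : Set G) :=
      ⟨x, w, hw, k, rfl, hwk⟩
    refine Set.mem_biUnion (Set.mem_image_of_mem C hk) ?_
    have hyd : (C k : G) ∈ W * ({k} : Set G) := by
      rw [hC]; simp only [hx, dif_pos]; exact hx.choose_spec
    obtain ⟨w', hw', k', hk', hw'k⟩ := hyd
    have hkk : k' = k := hk'
    rw [hkk] at hw'k
    apply hVd
    show ((C k : G)) / (x : G) ∈ V
    have : ((C k : G)) / (x : G) = w' * w⁻¹ := by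
      rw [← hw'k, ← hwk]; simp [div_eq_mul_inv, mul_inv_rev, mul_assoc]
    rw [this]
    exact hV₁m _ hw'.1 _ (by simpa using hw.2)
  haveI : CompactSpace (Completion ↥S) := by
    refine ⟨?_⟩
    have h1 : TotallyBounded (Set.range ((↑) : ↥S → Completion ↥S)) := by
      have := (htb.image (Completion.uniformContinuous_coe ↥S))
      simpa [Set.image_univ] using this
    have h2 : (Set.univ : Set (Completion ↥S)) = closure (Set.range ((↑) : ↥S → Completion ↥S)) :=
      (Completion.denseRange_coe.closure_range).symm
    rw [h2]
    exact h1.closure.isCompact_of_isClosed isClosed_closure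
  haveI : T2Space (Completion ↥S) := by infer_instance
  -- multiplication
  set mulS : ↥S → ↥S → ↥S := fun a b => ⟨(a : G) * (b : G), hmul (Set.mul_mem_mul a.2 b.2)⟩
    with hmulS
  have hucS : UniformContinuous₂ mulS := by
    rw [UniformContinuous₂, UniformContinuous, Filter.tendsto_def]
    intro d hd
    obtain ⟨V, hV, hVd⟩ := hEV_basis d hd
    obtain ⟨V₂, hV₂, hV₂m⟩ := exists_nhds_one_split hV
    obtain ⟨W, hWn, hWc, -⟩ := conj_control' hpre hV₂
    rw [uniformity_prod]
    have h1 : ((fun p : (↥S × ↥S) × (↥S × ↥S) => (p.1.1, p.2.1)) ⁻¹'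
        {p : ↥S × ↥S | (p.2 : G) / (p.1 : G) ∈ V₂}) ∈
        (𝓤 ↥S).comap (fun p : (↥S × ↥S) × (↥S × ↥S) => (p.1.1, p.2.1)) :=
      Filter.preimage_mem_comap (hEV_mem V₂ hV₂)
    have h2 : ((fun p : (↥S × ↥S) × (↥S × ↥S) => (p.1.2, p.2.2)) ⁻¹'
        {p : ↥S × ↥S | (p.2 : G) / (p.1 : G) ∈ W}) ∈
        (𝓤 ↥S).comap (fun p : (↥S × ↥S) × (↥S × ↥S) => (p.1.2, p.2.2)) :=
      Filter.preimage_mem_comap (hEV_mem W hWn)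
    refine Filter.mem_of_superset
      (Filter.inter_mem (Filter.mem_inf_of_left h1) (Filter.mem_inf_of_right h2)) ?_
    rintro ⟨⟨x, y⟩, ⟨x', y'⟩⟩ ⟨hq1, hq2⟩
    apply hVd
    show ((x' : G) * (y' : G)) / ((x : G) * (y : G)) ∈ V
    have hid : ((x' : G) * (y' : G)) / ((x : G) * (y : G)) =
        ((x' : G) * ((y' : G) / (y : G)) * (x' : G)⁻¹) * ((x' : G) / (x : G)) := by
      simp [div_eq_mul_inv, mul_inv_rev, mul_assoc]
    rw [hid]
    exact hV₂m _ (hWc (x' : G) x'.2 _ hq2) _ hq1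
  set m : Completion ↥S → Completion ↥S → Completion ↥S := Completion.map₂ mulS with hm
  have hmcoe : ∀ a b : ↥S, m ↑a ↑b = (↑(mulS a b) : Completion ↥S) := fun a b =>
    Completion.map₂_coe_coe a b mulS hucS
  have hmc : Continuous (Function.uncurry m) := (Completion.uniformContinuous_map₂ mulS).continuous
  have hmc' : Continuous (fun p : Completion ↥S × Completion ↥S => m p.1 p.2) := hmc
  have hassoc : ∀ x y z : Completion ↥S, m (m x y) z = m x (m y z) := by
    intro x y z
    refine Completion.induction_on₃ x y z ?_ ?_
    · apply isClosed_eq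
      · exact hmc'.comp ((hmc'.comp (continuous_fst.prodMk
          (continuous_fst.comp continuous_snd))).prodMk (continuous_snd.comp continuous_snd))
      · exact hmc'.comp (continuous_fst.prodMk (hmc'.comp
          ((continuous_fst.comp continuous_snd).prodMk (continuous_snd.comp continuous_snd))))
    · intro a b c
      rw [hmcoe, hmcoe, hmcoe, hmcoe]
      exact congrArg _ (Subtype.ext (mul_assoc (a:G) b c))
  have hcoeU : Filter.comap (fun p : ↥S × ↥S => ((p.1 : Completion ↥S), (p.2 : Completion ↥S)))
      (𝓤 (Completion ↥S)) = 𝓤 ↥S := Completion.comap_coe_eq_uniformity ↥S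
  have hdense3 : DenseRange (fun t : ↥S × ↥S × ↥S =>
      ((t.1 : Completion ↥S), (t.2.1 : Completion ↥S), (t.2.2 : Completion ↥S))) := by
    have := Completion.denseRange_coe₃ (α := ↥S) (β := ↥S) (γ := ↥S)
    convert this using 1
  have hlcancel : ∀ a x y : Completion ↥S, m a x = m a y → x = y := by
    intro a x y h
    refine eq_of_uniformity_basis uniformity_hasBasis_closed ?_
    intro E hEp
    obtain ⟨hE, hEclosed⟩ := hEp
    have hpre1 : (fun p : ↥S × ↥S => ((p.1 : Completion ↥S), (p.2 : Completion ↥S))) ⁻¹' E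
        ∈ 𝓤 ↥S := by
      rw [← hcoeU]
      exact Filter.preimage_mem_comap hE
    obtain ⟨V, hV, hVE⟩ := hEV_basis _ hpre1
    obtain ⟨W, hWn, -, hWc⟩ := conj_control' hpre hV
    have hEW : {p : ↥S × ↥S | (p.2 : G) / (p.1 : G) ∈ W} ∈ 𝓤 ↥S := hEV_mem W hWn
    rw [← hcoeU] at hEW
    obtain ⟨D₀, hD₀, hD₀sub⟩ := Filter.mem_comap.1 hEW
    obtain ⟨D, ⟨hD, hDopen⟩, hDsub⟩ := (uniformity_hasBasis_open.mem_iff).1 hD₀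
    set B : Set (Completion ↥S × Completion ↥S × Completion ↥S) :=
      ((fun t : Completion ↥S × Completion ↥S × Completion ↥S =>
          (m t.1 t.2.1, m t.1 t.2.2)) ⁻¹' D) ∩
        ((fun t : Completion ↥S × Completion ↥S × Completion ↥S => (t.2.1, t.2.2)) ⁻¹' Eᶜ)
      with hBdef
    have hBopen : IsOpen B := by
      apply IsOpen.inter
      · exact hDopen.preimage ((hmc'.comp (continuous_fst.prodMk
          (continuous_fst.comp continuous_snd))).prodMk (hmc'.comp (continuous_fst.prodMk
          (continuous_snd.comp continuous_snd))))
      · exact (hEclosed.isOpen_compl).preimage ((continuous_fst.comp continuous_snd).prodMk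
          (continuous_snd.comp continuous_snd))
    have hBempty : B = ∅ := by
      by_contra hBne
      obtain ⟨t, ht⟩ := hdense3.exists_mem_open hBopen (Set.nonempty_iff_ne_empty.2 hBne)
      obtain ⟨hts, htE⟩ := ht
      have hts' : (m ↑t.1 ↑t.2.1, m ↑t.1 ↑t.2.2) ∈ D := hts
      rw [hmcoe, hmcoe] at hts'
      have h1b : ((mulS t.1 t.2.1 : ↥S), (mulS t.1 t.2.2 : ↥S)) ∈
          (fun p : ↥S × ↥S => ((p.1 : Completion ↥S), (p.2 : Completion ↥S))) ⁻¹' D₀ :=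
        hDsub hts'
      have h2 : ((mulS t.1 t.2.2 : ↥S) : G) / ((mulS t.1 t.2.1 : ↥S) : G) ∈ W :=
        hD₀sub h1b
      have h3 : (t.2.2 : G) / (t.2.1 : G) ∈ V := by
        have := hWc (t.1 : G) t.1.2 _ h2
        convert this using 1
        show (t.2.2 : G) / (t.2.1 : G) = (t.1:G)⁻¹ * (((t.1:G) * (t.2.2:G)) / ((t.1:G) * (t.2.1:G))) * (t.1:G)
        simp [div_eq_mul_inv, mul_inv_rev, mul_assoc]
      exact htE (hVE h3)
    by_contra hxyE
    have : (a, x, y) ∈ B := ⟨by show (m a x, m a y) ∈ D; rw [h]; exact refl_mem_uniformity hD, hxyE⟩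
    rw [hBempty] at this
    exact this
  have hrcancel : ∀ a x y : Completion ↥S, m x a = m y a → x = y := by
    intro a x y h
    refine eq_of_uniformity_basis uniformity_hasBasis_closed ?_
    intro E hEp
    obtain ⟨hE, hEclosed⟩ := hEp
    have hpre1 : (fun p : ↥S × ↥S => ((p.1 : Completion ↥S), (p.2 : Completion ↥S))) ⁻¹' E
        ∈ 𝓤 ↥S := by
      rw [← hcoeU]
      exact Filter.preimage_mem_comap hE
    obtain ⟨V, hV, hVE⟩ := hEV_basis _ hpre1
    have hEW : {p : ↥S × ↥S | (p.2 : G) / (p.1 : G) ∈ V} ∈ 𝓤 ↥S := hEV_mem V hV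
    rw [← hcoeU] at hEW
    obtain ⟨D₀, hD₀, hD₀sub⟩ := Filter.mem_comap.1 hEW
    obtain ⟨D, ⟨hD, hDopen⟩, hDsub⟩ := (uniformity_hasBasis_open.mem_iff).1 hD₀
    set B : Set (Completion ↥S × Completion ↥S × Completion ↥S) :=
      ((fun t : Completion ↥S × Completion ↥S × Completion ↥S =>
          (m t.2.1 t.1, m t.2.2 t.1)) ⁻¹' D) ∩
        ((fun t : Completion ↥S × Completion ↥S × Completion ↥S => (t.2.1, t.2.2)) ⁻¹' Eᶜ)
      with hBdef
    have hBopen : IsOpen B := by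
      apply IsOpen.inter
      · exact hDopen.preimage ((hmc'.comp ((continuous_fst.comp continuous_snd).prodMk
          continuous_fst)).prodMk (hmc'.comp ((continuous_snd.comp continuous_snd).prodMk
          continuous_fst)))
      · exact (hEclosed.isOpen_compl).preimage ((continuous_fst.comp continuous_snd).prodMk
          (continuous_snd.comp continuous_snd))
    have hBempty : B = ∅ := by
      by_contra hBne
      obtain ⟨t, ht⟩ := hdense3.exists_mem_open hBopen (Set.nonempty_iff_ne_empty.2 hBne)
      obtain ⟨hts, htE⟩ := ht
      have hts' : (m ↑t.2.1 ↑t.1, m ↑t.2.2 ↑t.1) ∈ D := hts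
      rw [hmcoe, hmcoe] at hts'
      have h1b : ((mulS t.2.1 t.1 : ↥S), (mulS t.2.2 t.1 : ↥S)) ∈
          (fun p : ↥S × ↥S => ((p.1 : Completion ↥S), (p.2 : Completion ↥S))) ⁻¹' D₀ :=
        hDsub hts'
      have h2 : ((mulS t.2.2 t.1 : ↥S) : G) / ((mulS t.2.1 t.1 : ↥S) : G) ∈ V :=
        hD₀sub h1b
      have h3 : (t.2.2 : G) / (t.2.1 : G) ∈ V := by
        convert h2 using 1
        show (t.2.2 : G) / (t.2.1 : G) = ((t.2.2:G) * (t.1:G)) / ((t.2.1:G) * (t.1:G))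
        simp [div_eq_mul_inv, mul_inv_rev, mul_assoc]
      exact htE (hVE h3)
    by_contra hxyE
    have : (a, x, y) ∈ B := ⟨by show (m x a, m y a) ∈ D; rw [h]; exact refl_mem_uniformity hD, hxyE⟩
    rw [hBempty] at this
    exact this
  letI : Mul (Completion ↥S) := ⟨m⟩
  letI : Semigroup (Completion ↥S) := { mul_assoc := hassoc }
  haveI : Nonempty (Completion ↥S) := Nonempty.map ((↑) : ↥S → Completion ↥S) hneS
  have hassoc' : ∀ x y z : Completion ↥S, x * y * z = x * (y * z) := hassoc
  have hlcancel' : ∀ a x y : Completion ↥S, a * x = a * y → x = y := hlcancel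
  have hrcancel' : ∀ a x y : Completion ↥S, x * a = y * a → x = y := hrcancel
  have hmulleft : ∀ r : Completion ↥S, Continuous (· * r) := fun r =>
    hmc'.comp (continuous_id.prodMk continuous_const)
  have hmulright : ∀ r : Completion ↥S, Continuous (r * ·) := fun r =>
    hmc'.comp (continuous_const.prodMk continuous_id)
  obtain ⟨e, he⟩ := exists_idempotent_of_compact_t2_of_continuous_mul_left hmulleft
  have hone : ∀ x : Completion ↥S, e * x = x ∧ x * e = x := by
    intro x
    constructor
    · exact hlcancel' e (e * x) x (by rw [← hassoc', he])
    · exact hrcancel' e (x * e) x (by rw [hassoc', he])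
  have hclosure_mul : ∀ s : Set (Completion ↥S), (∀ x ∈ s, ∀ y ∈ s, x * y ∈ s) →
      ∀ x ∈ closure s, ∀ y ∈ closure s, x * y ∈ closure s := by
    intro s hs x hx y hy
    have h2 : (fun p : Completion ↥S × Completion ↥S => m p.1 p.2) '' (s ×ˢ s) ⊆ s := by
      rintro _ ⟨⟨u, v⟩, ⟨hu, hv⟩, rfl⟩
      exact hs u hu v hv
    have h1 : (fun p : Completion ↥S × Completion ↥S => m p.1 p.2) '' (closure s ×ˢ closure s)
        ⊆ closure s := by
      rw [← closure_prod_eq]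
      exact (image_closure_subset_closure_image hmc').trans (closure_mono h2)
    exact h1 ⟨(x, y), Set.mk_mem_prod hx hy, rfl⟩
  have hinv : ∀ a : Completion ↥S, ∃ b, a * b = e ∧ b * a = e := by
    intro a
    set pw : ℕ → Completion ↥S := fun n => Nat.rec a (fun _ ih => ih * a) n with hpw
    have hpwmul : ∀ i j : ℕ, pw i * pw j = pw (i + j + 1) := by
      intro i j
      induction j with
      | zero => rfl
      | succ k ih =>
        show pw i * (pw k * a) = _
        rw [← hassoc', ih]
        rfl
    set Γ : Set (Completion ↥S) := closure (Set.range pw) with hΓ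
    have hrange_mul : ∀ x ∈ Set.range pw, ∀ y ∈ Set.range pw, x * y ∈ Set.range pw := by
      rintro _ ⟨i, rfl⟩ _ ⟨j, rfl⟩
      exact ⟨i + j + 1, (hpwmul i j).symm⟩
    have hΓmul : ∀ x ∈ Γ, ∀ y ∈ Γ, x * y ∈ Γ := hclosure_mul _ hrange_mul
    have hΓcpt : IsCompact Γ := isClosed_closure.isCompact
    have hΓne : Γ.Nonempty := ⟨a, subset_closure ⟨0, rfl⟩⟩
    obtain ⟨g, hgΓ, hgg⟩ := exists_idempotent_in_compact_subsemigroup hmulleft Γ hΓne hΓcpt hΓmul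
    have hge : g = e := hlcancel' g g e (by rw [hgg, (hone g).2])
    have heΓ : e ∈ Γ := hge ▸ hgΓ
    have hcommΓ : ∀ x ∈ Γ, a * x = x * a := by
      have hclosed : IsClosed {x : Completion ↥S | a * x = x * a} :=
        isClosed_eq (hmulright a) (hmulleft a)
      have hsub2 : Set.range pw ⊆ {x : Completion ↥S | a * x = x * a} := by
        rintro _ ⟨n, rfl⟩
        induction n with
        | zero => rfl
        | succ k ih =>
          show a * (pw k * a) = pw k * a * a
          rw [← hassoc', ih]
      intro x hx
      exact closure_minimal hsub2 hclosed hx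
    have hrange'_mul : ∀ x ∈ Set.range (fun n => pw (n + 1)),
        ∀ y ∈ Set.range (fun n => pw (n + 1)), x * y ∈ Set.range (fun n => pw (n + 1)) := by
      rintro _ ⟨i, rfl⟩ _ ⟨j, rfl⟩
      refine ⟨i + j + 2, ?_⟩
      show pw (i + j + 2 + 1) = pw (i + 1) * pw (j + 1)
      rw [hpwmul (i+1) (j+1)]
      have hnat : i + j + 2 + 1 = i + 1 + (j + 1) + 1 := by omega
      rw [hnat]
    obtain ⟨g', hg'Γ', hg'g'⟩ := exists_idempotent_in_compact_subsemigroup hmulleft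
      (closure (Set.range fun n => pw (n + 1))) ⟨pw 1, subset_closure ⟨0, rfl⟩⟩
      isClosed_closure.isCompact (hclosure_mul _ hrange'_mul)
    have hg'e : g' = e := hlcancel' g' g' e (by rw [hg'g', (hone g').2])
    have heΓ' : e ∈ closure (Set.range fun n => pw (n + 1)) := hg'e ▸ hg'Γ'
    have himg : closure (Set.range fun n => pw (n + 1)) ⊆ (fun x => a * x) '' Γ := by
      have hclosed : IsClosed ((fun x => a * x) '' Γ) := (hΓcpt.image (hmulright a)).isClosed
      refine closure_minimal ?_ hclosed
      rintro _ ⟨n, rfl⟩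
      refine ⟨pw n, subset_closure ⟨n, rfl⟩, ?_⟩
      show a * pw n = pw (n + 1)
      rw [hcommΓ (pw n) (subset_closure ⟨n, rfl⟩)]
    obtain ⟨b, hbΓ, hba⟩ := himg heΓ'
    refine ⟨b, hba, ?_⟩
    rw [← hcommΓ b hbΓ]
    exact hba
  letI : Monoid (Completion ↥S) :=
    { (inferInstance : Semigroup (Completion ↥S)) with
      one := e
      one_mul := fun x => (hone x).1
      mul_one := fun x => (hone x).2 }
  letI : Inv (Completion ↥S) := ⟨fun a => (hinv a).choose⟩
  letI : Group (Completion ↥S) :=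
    { (inferInstance : Monoid (Completion ↥S)), (inferInstance : Inv (Completion ↥S)) with
      inv_mul_cancel := fun a => (hinv a).choose_spec.2 }
  have hinvcont : Continuous (fun x : Completion ↥S => x⁻¹) := by
    rw [continuous_iff_isClosed]
    intro C hC
    have hset : (fun x : Completion ↥S => x⁻¹) ⁻¹' C =
        Prod.fst '' ({p : Completion ↥S × Completion ↥S | p.1 * p.2 = e} ∩ {p | p.2 ∈ C}) := by
      ext x
      constructor
      · intro hx
        exact ⟨(x, x⁻¹), ⟨mul_inv_cancel x, hx⟩, rfl⟩
      · rintro ⟨⟨x', y⟩, ⟨hxy, hyC⟩, rfl⟩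
        have hy : y = x'⁻¹ := eq_inv_of_mul_eq_one_right hxy
        show x'⁻¹ ∈ C
        rw [← hy]
        exact hyC
    rw [hset]
    have hclosed : IsClosed ({p : Completion ↥S × Completion ↥S | p.1 * p.2 = e} ∩ {p | p.2 ∈ C}) :=
      (isClosed_eq hmc' continuous_const).inter (hC.preimage continuous_snd)
    exact (hclosed.isCompact.image continuous_fst).isClosed
  haveI : IsTopologicalGroup (Completion ↥S) :=
    { continuous_mul := hmc', continuous_inv := hinvcont }
  -- measure-theoretic conclusion
  letI : MeasurableSpace (Completion ↥S) := borel _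
  haveI : BorelSpace (Completion ↥S) := ⟨rfl⟩
  haveI : LocallyCompactSpace (Completion ↥S) := by infer_instance
  set μ := MeasureTheory.Measure.haar (G := Completion ↥S) with hμ
  -- transfer the disjoint family
  have hOex : ∀ i : ↥F, ∃ O : Set (Completion ↥S), IsOpen O ∧
      ((↑) : ↥S → Completion ↥S) ⁻¹' O = (i : Set ↥S) := by
    intro i
    have hopen : IsOpen (i : Set ↥S) := (hF i i.2).1
    rw [(Completion.isDenseInducing_coe (α := ↥S)).isInducing.isOpen_iff] at hopen
    obtain ⟨O, hO, hOpre⟩ := hopen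
    exact ⟨O, hO, hOpre⟩
  choose O hOopen hOpre using hOex
  have hOpos : ∀ i : ↥F, 0 < μ (O i) := by
    intro i
    obtain ⟨u, hu⟩ := (hF i i.2).2
    have : (u : Completion ↥S) ∈ O i := by
      rw [← Set.mem_preimage, hOpre]
      exact hu
    exact (hOopen i).measure_pos μ ⟨_, this⟩
  have hOdisj : Pairwise (Function.onFun Disjoint O) := by
    intro i j hij
    have hsets : Disjoint (i : Set ↥S) (j : Set ↥S) :=
      hdisj i.2 j.2 (fun hcon => hij (Subtype.ext hcon))
    have hinter : O i ∩ O j = ∅ := by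
      by_contra hcon
      obtain ⟨p, hp⟩ := Completion.denseRange_coe.exists_mem_open
        ((hOopen i).inter (hOopen j)) (Set.nonempty_iff_ne_empty.2 hcon)
      have : (p : ↥S) ∈ (i : Set ↥S) ∩ (j : Set ↥S) := by
        constructor
        · rw [← hOpre i]; exact hp.1
        · rw [← hOpre j]; exact hp.2
      rw [Set.disjoint_iff_inter_eq_empty.1 hsets] at this
      exact this
    exact Set.disjoint_iff_inter_eq_empty.2 hinter
  have hcnt : Set.Countable {i : ↥F | 0 < μ (O i)} :=
    MeasureTheory.Measure.countable_meas_pos_of_disjoint_iUnion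
      (fun i => (hOopen i).measurableSet) hOdisj
  have huniv : {i : ↥F | 0 < μ (O i)} = Set.univ := Set.eq_univ_of_forall fun i => hOpos i
  rw [huniv, Set.countable_univ_iff] at hcnt
  exact Set.countable_coe_iff.1 hcnt
end

section
/- If S is an open pseudocompact submonoid of a Hausdorff topological group G and H = S ∩ S⁻¹, then H is an open subgroup of S and S is the union of finitely many left cosets s₁H, ..., sₙH with s₁, ..., sₙ ∈ S. -/
open Pointwise

/-- If S is an open pseudocompact submonoid and H = S ∩ S⁻¹, then H is an open subgroup
of S and S is a finite union of left cosets of H by elements of S. -/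
theorem stmt13 {G : Type*} [Group G] [TopologicalSpace G] [IsTopologicalGroup G] [T2Space G]
    (S : Set G) (hopen : IsOpen S) (hone : (1 : G) ∈ S) (hmul : S * S ⊆ S)
    (hpc : IsPseudocompact ↥S) :
    let H : Set G := S ∩ S⁻¹
    IsOpen H ∧ (1 : G) ∈ H ∧ H * H ⊆ H ∧ H⁻¹ ⊆ H ∧
      ∃ T : Finset G, (T : Set G) ⊆ S ∧ S = ⋃ s ∈ T, s • H := by
  classical
  intro H
  have hHopen : IsOpen H := hopen.inter hopen.inv
  have hHone : (1 : G) ∈ H := ⟨hone, by simpa using hone⟩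
  have hHmul : H * H ⊆ H := by
    rintro _ ⟨x, hx, y, hy, rfl⟩
    refine ⟨hmul (Set.mul_mem_mul hx.1 hy.1), ?_⟩
    simp only [Set.mem_inv, mul_inv_rev]
    exact hmul (Set.mul_mem_mul hy.2 hx.2)
  have hHinv : H⁻¹ ⊆ H := fun x hx =>
    ⟨by simpa using (Set.mem_inv.1 hx).2, (Set.mem_inv.1 hx).1⟩
  refine ⟨hHopen, hHone, hHmul, hHinv, ?_⟩
  -- H is a subgroup of G
  let H' : Subgroup G :=
    { carrier := H
      one_mem' := hHone
      mul_mem' := fun ha hb => hHmul (Set.mul_mem_mul ha hb)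
      inv_mem' := fun ha => hHinv (Set.inv_mem_inv.2 ha) }
  have hHS : H ⊆ S := fun x hx => hx.1
  have hcoset : ∀ s ∈ S, s • H ⊆ S := by
    intro s hs x hx
    obtain ⟨h, hh, rfl⟩ := hx
    exact hmul (Set.mul_mem_mul hs (hHS hh))
  -- the quotient map is locally constant after composing with any function
  have hloc : ∀ g : G ⧸ H' → ℝ, Continuous fun x : G => g (QuotientGroup.mk x) := by
    intro g
    apply IsLocallyConstant.continuous
    rw [IsLocallyConstant.iff_exists_open]
    intro x
    refine ⟨x • H, hHopen.smul x, ⟨1, hHone, mul_one x⟩, ?_⟩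
    rintro _ ⟨h, hh, rfl⟩
    congr 1
    exact (QuotientGroup.eq (s := H')).2 (by simpa using H'.inv_mem hh)
  -- the image of S in the quotient is finite
  have key : (QuotientGroup.mk '' S : Set (G ⧸ H')).Finite := by
    by_contra hinf
    have hinf' : (QuotientGroup.mk '' S : Set (G ⧸ H')).Infinite := hinf
    let e := hinf'.natEmbedding
    let g : G ⧸ H' → ℝ := fun y => if h : ∃ n, (e n : G ⧸ H') = y then (h.choose : ℝ) else 0
    obtain ⟨M, hM⟩ := hpc.2.2 (fun x : S => g (QuotientGroup.mk x.1))
      ((hloc g).comp continuous_subtype_val)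
    -- pick n with (n : ℝ) > M
    have hM0 : 0 ≤ M := le_trans (abs_nonneg _) (hM ⟨1, hone⟩)
    set n : ℕ := ⌊M⌋₊ + 1
    obtain ⟨x, hxS, hxy⟩ := (e n).2
    have hgx : g (QuotientGroup.mk x) = n := by
      have hex : ∃ m, (e m : G ⧸ H') = QuotientGroup.mk x := ⟨n, hxy.symm⟩
      have hcs := hex.choose_spec
      have hmn : hex.choose = n := e.injective (Subtype.ext (hcs.trans hxy))
      simp only [g, dif_pos hex, hmn]
    have := hM ⟨x, hxS⟩
    rw [hgx] at this
    have : (n : ℝ) ≤ M := le_trans (le_abs_self _) this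
    have hlt : M < (n : ℝ) := by
      have := Nat.lt_floor_add_one M
      push_cast [n]
      exact_mod_cast Nat.lt_floor_add_one M
    linarith
  -- choose representatives
  let ρ : G ⧸ H' → G := fun y => if h : ∃ s ∈ S, QuotientGroup.mk s = y then h.choose else 1
  have hρS : ∀ y ∈ (QuotientGroup.mk '' S : Set (G ⧸ H')), ρ y ∈ S ∧ QuotientGroup.mk (ρ y) = y := by
    intro y hy
    obtain ⟨s, hs, rfl⟩ := hy
    have hex : ∃ t ∈ S, QuotientGroup.mk t = (QuotientGroup.mk s : G ⧸ H') := ⟨s, hs, rfl⟩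
    simp only [ρ, dif_pos hex]
    exact ⟨hex.choose_spec.1, hex.choose_spec.2⟩
  refine ⟨key.toFinset.image ρ, ?_, ?_⟩
  · intro x hx
    simp only [Finset.coe_image, Set.mem_image, Set.Finite.coe_toFinset] at hx
    obtain ⟨y, hy, rfl⟩ := hx
    exact (hρS y hy).1
  · apply Set.Subset.antisymm
    · intro x hx
      have hmem : (QuotientGroup.mk x : G ⧸ H') ∈ QuotientGroup.mk '' S := ⟨x, hx, rfl⟩
      obtain ⟨hρmem, hρeq⟩ := hρS _ hmem
      simp only [Set.mem_iUnion]
      refine ⟨ρ (QuotientGroup.mk x), Finset.mem_image.2 ⟨_, key.mem_toFinset.2 hmem, rfl⟩, ?_⟩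
      have : (ρ (QuotientGroup.mk x))⁻¹ * x ∈ H' := (QuotientGroup.eq (s := H')).1 hρeq
      exact ⟨(ρ (QuotientGroup.mk x))⁻¹ * x, this, by simp [smul_eq_mul, mul_inv_cancel_left]⟩
    · intro x hx
      simp only [Set.mem_iUnion] at hx
      obtain ⟨s, hs, hxs⟩ := hx
      simp only [Finset.mem_image, key.mem_toFinset] at hs
      obtain ⟨y, hy, rfl⟩ := hs
      exact hcoset _ (hρS y hy).1 hxs
end

section
/- If G is a topological group, P ⊆ G is a Gδ set containing the identity, and S is a subsemigroup of G with P ⊆ S such that S is precompact and pseudocompact, then S is a subgroup of G. -/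
open Pointwise

section Aux

variable {G : Type*} [Group G] [TopologicalSpace G] [IsTopologicalGroup G]

private lemma sym_sq {V : Set G} (hV : V ∈ nhds (1 : G)) :
    ∃ W : Set G, IsOpen W ∧ (1 : G) ∈ W ∧ W⁻¹ = W ∧ W * W ⊆ V := by
  obtain ⟨V₁, hVo, hV1, hVV⟩ := exists_open_nhds_one_mul_subset hV
  refine ⟨V₁ ∩ V₁⁻¹, hVo.inter hVo.inv, ⟨hV1, by simpa using hV1⟩, ?_, ?_⟩
  · rw [Set.inter_inv, inv_inv, Set.inter_comm]
  · exact (Set.mul_subset_mul Set.inter_subset_left Set.inter_subset_left).trans hVV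

private lemma exists_chain (U : ℕ → Set G) (hU : ∀ n, U n ∈ nhds (1 : G)) :
    ∃ W : ℕ → Set G, (∀ n, IsOpen (W n)) ∧ (∀ n, (1 : G) ∈ W n) ∧ (∀ n, (W n)⁻¹ = W n) ∧
      (∀ n, W n * W n ⊆ U n) ∧ (∀ n, W (n + 1) * W (n + 1) ⊆ W n) := by
  classical
  let g : Set G → Set G := fun V => if h : V ∈ nhds (1 : G) then (sym_sq h).choose else Set.univ
  have hg : ∀ V, (h : V ∈ nhds (1 : G)) →
      IsOpen (g V) ∧ (1 : G) ∈ g V ∧ (g V)⁻¹ = g V ∧ g V * g V ⊆ V := by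
    intro V h
    simp only [g, dif_pos h]
    exact (sym_sq h).choose_spec
  let W : ℕ → Set G := fun n => Nat.rec (g (U 0)) (fun k prev => g (prev ∩ U (k + 1))) n
  have key : ∀ n, IsOpen (W n) ∧ (1 : G) ∈ W n ∧ (W n)⁻¹ = W n ∧ W n * W n ⊆ U n ∧
      (∀ k, n = k + 1 → W n * W n ⊆ W k) := by
    intro n
    induction n with
    | zero =>
      obtain ⟨h1, h2, h3, h4⟩ := hg (U 0) (hU 0)
      exact ⟨h1, h2, h3, h4, fun k hk => by omega⟩
    | succ m ih =>
      obtain ⟨ho, h1, hsym, hsub, -⟩ := ih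
      have hmem : W m ∩ U (m + 1) ∈ nhds (1 : G) :=
        Filter.inter_mem (ho.mem_nhds h1) (hU (m + 1))
      have hstep : W (m + 1) = g (W m ∩ U (m + 1)) := rfl
      obtain ⟨h1', h2', h3', h4'⟩ := hg (W m ∩ U (m + 1)) hmem
      rw [← hstep] at h1' h2' h3' h4'
      refine ⟨h1', h2', h3', h4'.trans Set.inter_subset_right, ?_⟩
      intro k hk
      have : k = m := by omega
      subst this
      exact h4'.trans Set.inter_subset_left
  exact ⟨W, fun n => (key n).1, fun n => (key n).2.1, fun n => (key n).2.2.1,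
    fun n => (key n).2.2.2.1, fun n => (key (n + 1)).2.2.2.2 n rfl⟩

private lemma closure_subset_sq {V : Set G} (hVo : IsOpen V) (hV1 : (1 : G) ∈ V)
    (hVs : V⁻¹ = V) : closure V ⊆ V * V := by
  intro x hx
  have hxo : IsOpen ((x * ·) '' V) := (isOpenMap_mul_left x) V hVo
  have hxm : x ∈ (x * ·) '' V := ⟨1, hV1, mul_one x⟩
  obtain ⟨w, hwim, hwV⟩ := mem_closure_iff.mp hx _ hxo hxm
  obtain ⟨v, hv, rfl⟩ := hwim
  have hvinv : v⁻¹ ∈ V := by rw [← hVs]; exact Set.inv_mem_inv.mpr hv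
  have := Set.mul_mem_mul hwV hvinv
  simpa using this

end Aux

/-- A precompact pseudocompact subsemigroup containing a Gδ set P with 1 ∈ P is a subgroup. -/
theorem stmt15 {G : Type*} [Group G] [TopologicalSpace G] [IsTopologicalGroup G] [T2Space G]
    (P : Set G) (hP : ∃ U : ℕ → Set G, (∀ n, IsOpen (U n)) ∧ P = ⋂ n, U n)
    (honeP : (1 : G) ∈ P)
    (S : Set G) (hPS : P ⊆ S) (hne : S.Nonempty) (hmul : S * S ⊆ S)
    (hpre : IsPrecompactIn S) (hpc : IsPseudocompact ↥S) :
    ∃ H : Subgroup G, (H : Set G) = S := by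
  classical
  obtain ⟨U, hUo, rfl⟩ := hP
  have h1U : ∀ n, (1 : G) ∈ U n := fun n => Set.mem_iInter.mp honeP n
  have hUn : ∀ n, U n ∈ nhds (1 : G) := fun n => (hUo n).mem_nhds (h1U n)
  obtain ⟨W, hWo, hW1, hWsym, hWU, hWchain⟩ := exists_chain U hUn
  have hWsub : ∀ n, W n ⊆ U n := fun n =>
    (Set.subset_mul_left (W n) (hW1 n)).trans (hWU n)
  have h1S : (1 : G) ∈ S := hPS honeP
  have winv : ∀ {n : ℕ} {x : G}, x ∈ W n → x⁻¹ ∈ W n := by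
    intro n x hx
    rw [← hWsym n]
    exact Set.inv_mem_inv.mpr hx
  have hWmono : ∀ n, W (n + 1) ⊆ W n := fun n =>
    (Set.subset_mul_left _ (hW1 (n + 1))).trans (hWchain n)
  have hWinter : ∀ {x : G}, (∀ n, x ∈ W n) → x ∈ S := fun hx =>
    hPS (Set.mem_iInter.mpr fun n => hWsub n (hx n))
  have hinv : ∀ s ∈ S, s⁻¹ ∈ S := by
    intro s hs
    have hs_pow : ∀ m : ℕ, s ^ m ∈ S := by
      intro m
      induction m with
      | zero => simpa using h1S
      | succ k ih => rw [pow_succ]; exact hmul (Set.mul_mem_mul ih hs)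
    -- step 2: some positive power of s lies in each W n
    have step2 : ∀ n, ∃ j : ℕ, 1 ≤ j ∧ s ^ j ∈ W n := by
      intro n
      obtain ⟨K, hK, -⟩ := hpre (W (n + 1)) ((hWo (n + 1)).mem_nhds (hW1 (n + 1)))
      have hm : ∀ m : ℕ, ∃ k ∈ (K : Set G), ∃ v ∈ W (n + 1), k * v = s ^ m := fun m =>
        Set.mem_mul.mp (hK (hs_pow m))
      choose k hkK v hv hkv using hm
      have key : ∀ a b : ℕ, a < b → k a = k b → ∃ j : ℕ, 1 ≤ j ∧ s ^ j ∈ W n := by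
        intro a b hlt hkab
        refine ⟨b - a, by omega, ?_⟩
        have hba : a + (b - a) = b := by omega
        have hpow : s ^ a * s ^ (b - a) = s ^ b := by rw [← pow_add, hba]
        have hform : s ^ (b - a) = (v a)⁻¹ * v b := by
          have h1 : s ^ (b - a) = (s ^ a)⁻¹ * s ^ b := by rw [← hpow]; group
          rw [h1, ← hkv a, ← hkv b, hkab]
          group
        rw [hform]
        exact hWchain n (Set.mul_mem_mul (winv (hv a)) (hv b))
      have hfin : ∃ a b : ℕ, a ≠ b ∧
          (⟨k a, hkK a⟩ : {x // x ∈ (K : Set G)}) = ⟨k b, hkK b⟩ :=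
        Finite.exists_ne_map_eq_of_infinite _
      obtain ⟨a, b, hab, heq⟩ := hfin
      have hk : k a = k b := congrArg Subtype.val heq
      rcases hab.lt_or_gt with h | h
      · exact key a b h hk
      · exact key b a h hk.symm
    -- step 3: pseudocompactness
    set f : ↥S → G := fun y => s * (y : G) with hf
    have hfc : Continuous f := continuous_const.mul continuous_subtype_val
    set O : ℕ → Set ↥S := fun n => f ⁻¹' W n with hO
    have hOopen : ∀ n, IsOpen (O n) := fun n => (hWo n).preimage hfc
    have hOne : ∀ n, (O n).Nonempty := by
      intro n
      obtain ⟨j, hj1, hjW⟩ := step2 n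
      refine ⟨⟨s ^ (j - 1), hs_pow _⟩, ?_⟩
      show s * s ^ (j - 1) ∈ W n
      have hj : j - 1 + 1 = j := by omega
      have hpow : s ^ j = s * s ^ (j - 1) := by
        conv_lhs => rw [← hj]
        rw [pow_succ']
      rw [← hpow]
      exact hjW
    have hOle : ∀ d m : ℕ, O (m + d) ⊆ O m := by
      intro d
      induction d with
      | zero => intro m; exact subset_rfl
      | succ c ih =>
        intro m
        have h1 : O (m + (c + 1)) ⊆ O (m + c) := Set.preimage_mono (hWmono (m + c))
        exact h1.trans (ih m)
    obtain ⟨hcr, -, hbd⟩ := hpc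
    have claim : ∃ x : ↥S, ∀ n, x ∈ closure (O n) := by
      by_contra hcon
      push_neg at hcon
      choose xp hxp using hOne
      have hsep : ∀ n, ∃ g : ↥S → ℝ, Continuous g ∧ g (xp n) = 1 ∧
          (∀ y, 0 ≤ g y ∧ g y ≤ 1) ∧ ∀ y ∉ O n, g y = 0 := by
        intro n
        obtain ⟨f0, hf0c, hf0x, hf0K⟩ := hcr.completely_regular (xp n) (O n)ᶜ
          (hOopen n).isClosed_compl (fun h => h (hxp n))
        refine ⟨fun y => 1 - (f0 y : ℝ),
          continuous_const.sub (continuous_subtype_val.comp hf0c), by simp [hf0x], ?_, ?_⟩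
        · intro y
          have h1 := (f0 y).2.1
          have h2 := (f0 y).2.2
          constructor <;> (dsimp only; linarith)
        · intro y hy
          have : f0 y = 1 := hf0K hy
          dsimp only
          rw [this]
          simp
      choose g hgc hgx hg01 hg0 using hsep
      set F : ↥S → ℝ := fun y => ∑ᶠ n : ℕ, (n : ℝ) * g n y with hF
      have hsupp : ∀ n : ℕ, Function.support (fun y => (n : ℝ) * g n y) ⊆ O n := by
        intro n y hy
        by_contra h
        exact hy (by simp [hg0 n y h])
      have hlf : LocallyFinite fun n : ℕ => Function.support fun y => (n : ℝ) * g n y := by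
        intro x
        obtain ⟨n₀, hn₀⟩ := hcon x
        refine ⟨(closure (O n₀))ᶜ, (isClosed_closure.isOpen_compl).mem_nhds hn₀,
          Set.Finite.subset (Set.finite_Iio n₀) ?_⟩
        rintro m ⟨y, hy2, hy1⟩
        simp only [Set.mem_Iio]
        by_contra hmge
        push_neg at hmge
        obtain ⟨d, rfl⟩ := Nat.exists_eq_add_of_le hmge
        exact hy1 (subset_closure (hOle d n₀ (hsupp _ hy2)))
      have hFc : Continuous F :=
        continuous_finsum (fun n => continuous_const.mul (hgc n)) hlf
      obtain ⟨M, hM⟩ := hbd F hFc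
      obtain ⟨n, hn⟩ := exists_nat_gt M
      have hptfin : (Function.support fun j : ℕ => (j : ℝ) * g j (xp n)).Finite :=
        hlf.point_finite (xp n)
      have hle : (n : ℝ) * g n (xp n) ≤ F (xp n) := by
        have h0 := single_le_finsum (f := fun j : ℕ => (j : ℝ) * g j (xp n)) n hptfin
          fun j => mul_nonneg (Nat.cast_nonneg j) (hg01 j (xp n)).1
        simpa [hF] using h0
      rw [hgx n, mul_one] at hle
      have h1 := hM (xp n)
      have h2 : F (xp n) ≤ M := le_trans (le_abs_self _) h1
      linarith
    obtain ⟨x, hx⟩ := claim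
    have hsx : ∀ n, s * (x : G) ∈ W n := by
      intro n
      have h2 : f x ∈ closure (W (n + 1)) :=
        (hfc.closure_preimage_subset (W (n + 1))) (hx (n + 1))
      exact hWchain n (closure_subset_sq (hWo (n + 1)) (hW1 (n + 1)) (hWsym (n + 1)) h2)
    have hq : s * (x : G) ∈ S := hWinter hsx
    have hqi : (s * (x : G))⁻¹ ∈ S := hWinter fun n => winv (hsx n)
    have hfinal : s⁻¹ = (x : G) * (s * (x : G))⁻¹ := by group
    rw [hfinal]
    exact hmul (Set.mul_mem_mul x.2 hqi)
  refine ⟨{ carrier := S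
            one_mem' := h1S
            mul_mem' := fun ha hb => hmul (Set.mul_mem_mul ha hb)
            inv_mem' := fun ha => hinv _ ha }, rfl⟩
end

section
/- An open subsemigroup of a compact Hausdorff topological group is a closed subgroup. -/
open Pointwise

/-- An open subsemigroup of a compact Hausdorff topological group is a closed subgroup. -/
theorem stmt17 {G : Type*} [Group G] [TopologicalSpace G] [IsTopologicalGroup G] [T2Space G]
    [CompactSpace G]
    (S : Set G) (hopen : IsOpen S) (hne : S.Nonempty) (hmul : S * S ⊆ S) :
    IsClosed S ∧ ∃ H : Subgroup G, (H : Set G) = S := by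
  -- powers of elements of S stay in S
  have hpow : ∀ x ∈ S, ∀ n : ℕ, 1 ≤ n → x ^ n ∈ S := by
    intro x hx n hn
    induction n with
    | zero => omega
    | succ k ih =>
      rcases Nat.eq_or_lt_of_le hn with h | h
      · simpa [← h] using hx
      · have hk : x ^ k ∈ S := ih (by omega)
        have : x ^ k * x ∈ S * S := Set.mul_mem_mul hk hx
        simpa [pow_succ] using hmul this
  -- key: for x ∈ S, every nbhd of 1 contains x ^ n for some n ≥ 2
  have key : ∀ x ∈ S, ∀ U ∈ nhds (1 : G), ∃ n, 2 ≤ n ∧ x ^ n ∈ U := by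
    intro x _hx U hU
    obtain ⟨y, hy⟩ := exists_clusterPt_of_compactSpace (Filter.map (x ^ ·) Filter.atTop)
    have hy : MapClusterPt y Filter.atTop (x ^ ·) := hy
    have hc : Continuous fun p : G × G => p.1⁻¹ * p.2 :=
      (continuous_fst.inv).mul continuous_snd
    have h1 : (fun p : G × G => p.1⁻¹ * p.2) ⁻¹' U ∈ nhds (y, y) := by
      apply hc.continuousAt.preimage_mem_nhds
      simpa using hU
    rw [mem_nhds_prod_iff] at h1
    obtain ⟨V, hV, W, hW, hVW⟩ := h1
    have hfreq := (mapClusterPt_iff_frequently.mp hy) (V ∩ W) (Filter.inter_mem hV hW)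
    rw [Filter.frequently_atTop] at hfreq
    obtain ⟨n, -, hn⟩ := hfreq 0
    obtain ⟨m, hm, hmVW⟩ := hfreq (n + 2)
    refine ⟨m - n, by omega, ?_⟩
    have hmem : ((x ^ n)⁻¹ * x ^ m) ∈ U := hVW (Set.mk_mem_prod hn.1 hmVW.2)
    have heq : x ^ (m - n) = (x ^ n)⁻¹ * x ^ m := by
      rw [eq_inv_mul_iff_mul_eq, ← pow_add]
      congr 1
      omega
    rwa [heq]
  obtain ⟨s, hs⟩ := hne
  -- 1 ∈ S
  have h1S : (1 : G) ∈ S := by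
    have hUopen : IsOpen ((fun g : G => s * g⁻¹) ⁻¹' S) :=
      hopen.preimage (continuous_const.mul continuous_inv)
    have hU1 : ((fun g : G => s * g⁻¹) ⁻¹' S) ∈ nhds (1 : G) :=
      hUopen.mem_nhds (by simpa using hs)
    obtain ⟨n, hn2, hnU⟩ := key s hs _ hU1
    have hA : s * (s ^ n)⁻¹ ∈ S := hnU
    have hB : s ^ (n - 1) ∈ S := hpow s hs _ (by omega)
    have : s ^ (n - 1) * (s * (s ^ n)⁻¹) ∈ S * S := Set.mul_mem_mul hB hA
    have hcalc : s ^ (n - 1) * (s * (s ^ n)⁻¹) = 1 := by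
      have : s ^ (n - 1) * s = s ^ n := by
        rw [← pow_succ]; congr 1; omega
      rw [← mul_assoc, this, mul_inv_cancel]
    rw [hcalc] at this
    exact hmul this
  -- inverses
  have hinv : ∀ x ∈ S, x⁻¹ ∈ S := by
    intro x hx
    have hUopen : IsOpen ((fun g : G => g⁻¹) ⁻¹' S) := hopen.preimage continuous_inv
    have hU1 : ((fun g : G => g⁻¹) ⁻¹' S) ∈ nhds (1 : G) :=
      hUopen.mem_nhds (by simpa using h1S)
    obtain ⟨n, hn2, hnU⟩ := key x hx _ hU1
    have hA : (x ^ n)⁻¹ ∈ S := hnU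
    have hB : x ^ (n - 1) ∈ S := hpow x hx _ (by omega)
    have hmem : x ^ (n - 1) * (x ^ n)⁻¹ ∈ S * S := Set.mul_mem_mul hB hA
    have hcalc : x ^ (n - 1) * (x ^ n)⁻¹ = x⁻¹ := by
      have h : x * x ^ (n - 1) = x ^ n := by rw [← pow_succ']; congr 1; omega
      rw [← h]
      group
    rw [hcalc] at hmem
    exact hmul hmem
  refine ⟨?_, ⟨{ carrier := S
                 mul_mem' := fun ha hb => hmul (Set.mul_mem_mul ha hb)
                 one_mem' := h1S
                 inv_mem' := fun ha => hinv _ ha }, rfl⟩⟩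
  exact Subgroup.isClosed_of_isOpen
    { carrier := S
      mul_mem' := fun ha hb => hmul (Set.mul_mem_mul ha hb)
      one_mem' := h1S
      inv_mem' := fun ha => hinv _ ha } hopen
end

section
/- If S is a subsemigroup of a Hausdorff topological group G such that S ∩ S⁻¹ contains the identity and is open in the closure of S, and the closure of S is a precompact subgroup, then S is a subgroup of the closure of S. -/
open Pointwise

/-- If S ∩ S⁻¹ contains 1 and is open in closure S, and closure S is a precompact
subgroup, then S is a subgroup. -/
theorem stmt18 {G : Type*} [Group G] [TopologicalSpace G] [IsTopologicalGroup G] [T2Space G]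
    (S : Set G) (hmul : S * S ⊆ S) (hone : (1 : G) ∈ S ∩ S⁻¹)
    (hrelopen : ∃ U : Set G, IsOpen U ∧ S ∩ S⁻¹ = U ∩ closure S)
    (hpre : IsPrecompactIn (closure S))
    (H : Subgroup G) (hH : (H : Set G) = closure S) :
    ∃ K : Subgroup G, (K : Set G) = S := by
  obtain ⟨U, hUopen, hUeq⟩ := hrelopen
  have h1S : (1 : G) ∈ S := hone.1
  have h1U : (1 : G) ∈ U := by
    have := hone; rw [hUeq] at this; exact this.1
  have hmul' : ∀ a ∈ S, ∀ b ∈ S, a * b ∈ S := fun a ha b hb => hmul (Set.mul_mem_mul ha hb)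
  have hinv : ∀ x ∈ S, x⁻¹ ∈ S := by
    intro x hx
    have hpow : ∀ n : ℕ, x ^ n ∈ S := by
      intro n
      induction n with
      | zero => simpa using h1S
      | succ n ih => rw [pow_succ]; exact hmul' _ ih _ hx
    obtain ⟨V, hV, hVU⟩ := exists_nhds_split_inv (hUopen.mem_nhds h1U)
    obtain ⟨K, -, hK2⟩ := hpre V hV
    have hxc : ∀ n : ℕ, x ^ (n + 1) ∈ V * (K : Set G) :=
      fun n => hK2 (subset_closure (hpow (n + 1)))
    choose v hv k hk hvk using fun n => Set.mem_mul.mp (hxc n)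
    have hcard : Fintype.card {y // y ∈ K} < Fintype.card (Fin (K.card + 1)) := by
      simp
    obtain ⟨i, j, hij, hfij⟩ :=
      Fintype.exists_ne_map_eq_of_card_lt
        (fun i : Fin (K.card + 1) => (⟨k i, hk i⟩ : {y // y ∈ K})) hcard
    -- WLOG i < j
    wlog hlt : (i : ℕ) < (j : ℕ) generalizing i j
    · exact this j i hij.symm hfij.symm
        (lt_of_le_of_ne (not_lt.mp hlt) (fun h => hij (Fin.ext h.symm)))
    have hkeq : k (i : ℕ) = k (j : ℕ) := congrArg Subtype.val hfij
    set m : ℕ := (i : ℕ)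
    set n : ℕ := (j : ℕ)
    set d : ℕ := n - m with hd
    have hd1 : 1 ≤ d := Nat.sub_pos_of_lt hlt
    -- x ^ d = v n * (v m)⁻¹ ∈ U
    have key : x ^ d = v n / v m := by
      have h1 : x ^ (n + 1) = v n * k n := (hvk n).symm
      have h2 : x ^ (m + 1) = v m * k m := (hvk m).symm
      have : x ^ d * x ^ (m + 1) = x ^ (n + 1) := by
        rw [← pow_add]; congr 1; omega
      rw [h1, h2, hkeq] at this
      rw [div_eq_mul_inv]
      calc x ^ d = x ^ d * (v m * k n) * (v m * k n)⁻¹ := by group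
        _ = v n * k n * (v m * k n)⁻¹ := by rw [this]
        _ = v n * (v m)⁻¹ := by group
    have hxdU : x ^ d ∈ U := by rw [key]; exact hVU _ (hv n) _ (hv m)
    have hxdSS : x ^ d ∈ S ∩ S⁻¹ := by
      rw [hUeq]; exact ⟨hxdU, subset_closure (hpow d)⟩
    have hxdinv : (x ^ d)⁻¹ ∈ S := Set.mem_inv.mp hxdSS.2
    have hfinal : x⁻¹ = x ^ (d - 1) * (x ^ d)⁻¹ := by
      have : x ^ d = x * x ^ (d - 1) := by
        rw [← pow_succ', Nat.sub_add_cancel hd1]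
      rw [this]; group
    rw [hfinal]
    exact hmul' _ (hpow (d - 1)) _ hxdinv
  exact ⟨{ carrier := S
           mul_mem' := fun ha hb => hmul' _ ha _ hb
           one_mem' := h1S
           inv_mem' := fun ha => hinv _ ha }, rfl⟩
end

section
/- Let G be a Hausdorff topological group, S a precompact pseudocompact subsemigroup of G, and N a closed normal subgroup of the closure of S with N ⊆ S such that the quotient (closure S)/N is metrizable. If the image of S in (closure S)/N is a subgroup, then S is a subgroup of G. -/
open Pointwise

/-- If S is precompact pseudocompact, N ⊆ S is a closed normal subgroup of closure S
with metrizable quotient, and the image of S in the quotient is a subgroup,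
then S is a subgroup of G. -/
theorem stmt19 {G : Type*} [Group G] [TopologicalSpace G] [IsTopologicalGroup G] [T2Space G]
    (S : Set G) (hne : S.Nonempty) (hmul : S * S ⊆ S)
    (hpre : IsPrecompactIn S) (hpc : IsPseudocompact ↥S)
    (H : Subgroup G) (hH : (H : Set G) = closure S)
    (N : Subgroup H) [N.Normal]
    (hNS : (fun x : H => (x : G)) '' (N : Set H) ⊆ S)
    (hNcl : IsClosed (N : Set H))
    [TopologicalSpace.MetrizableSpace (H ⧸ N)]
    (hQ : ∃ Q : Subgroup (H ⧸ N), (Q : Set (H ⧸ N)) =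
      (QuotientGroup.mk : H → H ⧸ N) '' {x : H | (x : G) ∈ S}) :
    ∃ K : Subgroup G, (K : Set G) = S := by
  obtain ⟨Q, hQeq⟩ := hQ
  have hinv : ∀ x ∈ S, x⁻¹ ∈ S := by
    intro x hx
    have hxH : x ∈ H := by
      have : x ∈ (H : Set G) := by rw [hH]; exact subset_closure hx
      exact this
    set xh : H := ⟨x, hxH⟩ with hxh
    have hmem : QuotientGroup.mk xh ∈ Q := by
      rw [← SetLike.mem_coe, hQeq]; exact ⟨xh, hx, rfl⟩
    have hmem2 : QuotientGroup.mk (xh⁻¹) ∈ Q := by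
      have := Q.inv_mem hmem
      simpa using this
    rw [← SetLike.mem_coe, hQeq] at hmem2
    obtain ⟨s, hs, hπ⟩ := hmem2
    have hn : s⁻¹ * xh⁻¹ ∈ N := (QuotientGroup.eq).mp hπ
    have hnS : ((s⁻¹ * xh⁻¹ : H) : G) ∈ S := hNS ⟨_, hn, rfl⟩
    have : (s : G) * ((s⁻¹ * xh⁻¹ : H) : G) ∈ S := hmul ⟨_, hs, _, hnS, rfl⟩
    simpa using this
  have hone : (1 : G) ∈ S := by
    obtain ⟨x, hx⟩ := hne
    have := hmul ⟨x, hx, x⁻¹, hinv x hx, rfl⟩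
    simpa using this
  exact ⟨{ carrier := S
           one_mem' := hone
           mul_mem' := fun ha hb => hmul ⟨_, ha, _, hb, rfl⟩
           inv_mem' := fun ha => hinv _ ha }, rfl⟩
end
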